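/- arXiv:2101.00486 — 8 statements merged into one kernel-verified Lean document; each statement's English description precedes it below -/
import Mathlib

section
/- Let v = (v_0, ..., v_{2k}) be a real sequence with v_0 > 0 whose Hankel matrix A_v = (v_{i+j})_{i,j=0}^k is positive semidefinite and singular, with rank r := min{i : column v_i of A_v lies in the span of columns v_0,...,v_{i-1}} satisfying r ≤ k. Then the top-left (r)×(r) corner A_v(r-1) = (v_{i+j})_{i,j=0}^{r-1} is positive definite. -/
/-!
The corner `A_v(r-1)` is the principal submatrix of the positive semidefinite matrix `A_v` on
the columns `v_0, …, v_{r-1}`, which are linearly independent by minimality of `r`. Writing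
`A_v = Bᴴ B`, that corner is `Cᴴ C` for the corresponding columns `C` of `B`; these are
independent as well, since `Bᴴ` maps them onto the columns of `A_v`, so `Cᴴ C` is positive
definite.
-/

open Matrix MeasureTheory

noncomputable section

/-- The `(k+1) × (k+1)` Hankel matrix `A_v = (v_{i+j})_{i,j=0}^k`. -/
def hankel (k : ℕ) (v : ℕ → ℝ) : Matrix (Fin (k+1)) (Fin (k+1)) ℝ :=
  Matrix.of fun i j => v (i.1 + j.1)

/-- The top-left `r × r` corner `A_v(r-1) = (v_{i+j})_{i,j=0}^{r-1}`. -/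
def hcorner (v : ℕ → ℝ) (r : ℕ) : Matrix (Fin r) (Fin r) ℝ :=
  Matrix.of fun i j => v (i.1 + j.1)

/-- The `(j+1)`-th column of the Hankel matrix `A_v`. -/
def hcol (k : ℕ) (v : ℕ → ℝ) (j : ℕ) : Fin (k+1) → ℝ :=
  fun i => v (i.1 + j)

/-- `r = rank v`: column `v_r` lies in the span of the preceding columns, and `r`
is minimal with this property. -/
def seqRank (k : ℕ) (v : ℕ → ℝ) (r : ℕ) : Prop :=
  hcol k v r ∈ Submodule.span ℝ (hcol k v '' {j | j < r}) ∧
  ∀ i < r, hcol k v i ∉ Submodule.span ℝ (hcol k v '' {j | j < i})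

/-- `φ = A_v(r-1)⁻¹ (v_r,…,v_{2r-1})ᵀ`. -/
def phi (v : ℕ → ℝ) (r : ℕ) : Fin r → ℝ :=
  (hcorner v r)⁻¹.mulVec fun i => v (r + i.1)

open Set
open scoped ComplexOrder MatrixOrder

theorem linearIndepOn_Iio_of_notMem_span {K V : Type*} [DivisionRing K] [AddCommGroup V]
    [Module K V] {f : ℕ → V} {r : ℕ}
    (h : ∀ i < r, f i ∉ Submodule.span K (f '' Iio i)) : LinearIndepOn K f (Iio r) := by
  induction r with
  | zero => simp
  | succ n ih =>
    rw [← Order.succ_eq_add_one, Order.Iio_succ_eq_insert,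
      linearIndepOn_insert (s := Iio n) self_notMem_Iio]
    exact ⟨ih fun i hi => h i (by omega), h n (by omega)⟩

theorem Matrix.PosSemidef.posDef_submatrix_of_linearIndependent_col {𝕜 m n : Type*} [RCLike 𝕜]
    [Fintype m] [Fintype n] {M : Matrix n n 𝕜} (hM : M.PosSemidef) {e : m → n}
    (he : LinearIndependent 𝕜 (M.col ∘ e)) : (M.submatrix e e).PosDef := by
  classical
  obtain ⟨B, rfl⟩ := CStarAlgebra.nonneg_iff_eq_star_mul_self.mp hM.nonneg
  have hBe : LinearIndependent 𝕜 (B.col ∘ e) := he.of_comp (star B).mulVecLin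
  rw [submatrix_mul _ _ _ _ _ Function.bijective_id, star_eq_conjTranspose,
    ← conjTranspose_submatrix]
  exact .conjTranspose_mul_self _ (mulVec_injective_iff.mpr hBe)

theorem stmt0_general (k r : ℕ) (v : ℕ → ℝ)
    (hpsd : (hankel k v).PosSemidef)
    (hr : r ≤ k) (hrank : seqRank k v r) :
    (hcorner v r).PosDef := by
  have hcols : LinearIndependent ℝ ((hankel k v).col ∘ Fin.castLE (Nat.le_succ_of_le hr)) :=
    (linearIndepOn_Iio_of_notMem_span hrank.2).comp (fun i : Fin r => (⟨i, i.2⟩ : Iio r))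
      fun i j hij => Fin.ext (congrArg Subtype.val hij)
  -- `hcorner v r` is `(hankel k v).submatrix e e` for `e = Fin.castLE _` by definition
  exact hpsd.posDef_submatrix_of_linearIndependent_col hcols

theorem stmt0 (k r : ℕ) (v : ℕ → ℝ) (hv0 : 0 < v 0)
    (hpsd : (hankel k v).PosSemidef) (hsing : (hankel k v).det = 0)
    (hr : r ≤ k) (hrank : seqRank k v r) :
    (hcorner v r).PosDef :=
  stmt0_general k r v hpsd hr hrank
end
end

section
/- Let v = (v_0,...,v_{2k}) ∈ ℝ^{2k+1} with v_0 > 0 be a singular sequence of rank r ≤ k whose Hankel matrix A_v is positive semidefinite. Then the generating polynomial p(x) := x^r − Σ_{i=0}^{r-1} φ_i x^i, where (φ_0,...,φ_{r-1}) := A_v(r-1)^{-1}(v_r,...,v_{2r-1})^T, has r distinct real roots. -/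
open Matrix MeasureTheory

noncomputable section

/-! The roots are the eigenvalues of the companion matrix `N` of `p`. The recurrence
`v_{m+r} = ∑ φ_j v_{m+j}` makes `N A` a Hankel matrix, where `A = A_v(r-1)`; minimality of the
rank together with `A_v ⪰ 0` makes `A` positive definite. Hence `N` is self-adjoint for the inner
product `⟨x, y⟩ = xᵀ A⁻¹ y` and has a basis of eigenvectors with real eigenvalues. An eigenvector
of a companion matrix is a multiple of `(1, μ, …, μ^(r-1))`, so distinct basis vectors have
distinct eigenvalues. -/

theorem Set.image_setOf_lt_eq_range {α : Type*} (f : ℕ → α) (n : ℕ) :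
    f '' {j | j < n} = Set.range fun j : Fin n => f j := by
  ext x
  simp [Fin.exists_iff]

theorem linearIndependent_of_notMem_span_image_lt {K V : Type*} [DivisionRing K]
    [AddCommGroup V] [Module K V] (f : ℕ → V) (n : ℕ)
    (hf : ∀ i < n, f i ∉ Submodule.span K (f '' {j | j < i})) :
    LinearIndependent K fun j : Fin n => f j := by
  induction n with
  | zero => exact linearIndependent_empty_type
  | succ n ih =>
    have hsnoc : (fun j : Fin (n + 1) => f j) = Fin.snoc (fun j : Fin n => f j) (f n) := by
      ext j
      refine Fin.lastCases ?_ (fun j => ?_) j <;> simp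
    rw [hsnoc, linearIndependent_finSnoc, ← Set.image_setOf_lt_eq_range]
    exact ⟨ih fun i hi => hf i (by omega), hf n (by omega)⟩

section PosDef

open scoped ComplexOrder

theorem Matrix.PosSemidef.posDef_submatrix_of_linearIndependent {m n 𝕜 : Type*} [Fintype m]
    [Fintype n] [DecidableEq n] [RCLike 𝕜] {H : Matrix n n 𝕜} (hH : H.PosSemidef) (e : m → n)
    (hli : LinearIndependent 𝕜 (H.submatrix id e).col) : (H.submatrix e e).PosDef := by
  set P : Matrix n m 𝕜 := (1 : Matrix n n 𝕜).submatrix id e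
  have hHP : H * P = H.submatrix id e := by
    simpa using mul_submatrix_one (Equiv.refl n) e H
  have hsub : H.submatrix e e = Pᴴ * H * P := by
    rw [Matrix.mul_assoc, hHP, conjTranspose_submatrix, conjTranspose_one]
    simpa using (one_submatrix_mul e (Equiv.refl n) (H.submatrix id e)).symm
  refine .of_dotProduct_mulVec_pos (hH.submatrix e).1 fun z hz => ?_
  have hquad : star z ⬝ᵥ H.submatrix e e *ᵥ z = star (P *ᵥ z) ⬝ᵥ H *ᵥ (P *ᵥ z) := by
    simp only [hsub, star_mulVec, dotProduct_mulVec, vecMul_vecMul, mulVec_mulVec,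
      Matrix.mul_assoc]
  rw [hquad]
  refine (hH.dotProduct_mulVec_nonneg _).lt_of_ne' fun h => hz ?_
  have hzero : H.submatrix id e *ᵥ z = 0 := by
    rw [← hHP, ← mulVec_mulVec, ← hH.dotProduct_mulVec_zero_iff, h]
  exact (mulVec_injective_iff.2 hli).eq_iff' (mulVec_zero _) |>.1 hzero

end PosDef

theorem Matrix.PosDef.inv_mul_eq_transpose_mul_inv {m : Type*} [Fintype m] [DecidableEq m]
    {A N : Matrix m m ℝ} (hA : A.PosDef) (hNA : (N * A)ᵀ = N * A) :
    A⁻¹ * N = Nᵀ * A⁻¹ := by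
  have := hA.isUnit.invertible
  have hANt : A * Nᵀ = N * A := by
    rw [← hNA, transpose_mul, ← conjTranspose_eq_transpose_of_trivial A, hA.isHermitian.eq]
  calc A⁻¹ * N = A⁻¹ * (N * A) * A⁻¹ := by simp [Matrix.mul_assoc]
    _ = Nᵀ * A⁻¹ := by rw [← hANt]; simp [← Matrix.mul_assoc]

theorem Matrix.PosDef.exists_linearIndependent_eigenvectors_of_mul_symm {m : ℕ}
    {A N : Matrix (Fin m) (Fin m) ℝ} (hA : A.PosDef) (hNA : (N * A)ᵀ = N * A) :
    ∃ (μ : Fin m → ℝ) (u : Fin m → Fin m → ℝ), LinearIndependent ℝ u ∧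
      ∀ l, N *ᵥ u l = μ l • u l := by
  have hB := hA.inv
  let _ := toNormedAddCommGroup A⁻¹ hB
  let _ := toInnerProductSpace A⁻¹ hB.posSemidef
  -- `Fin m → ℝ` also carries the sup norm, so the instances have to be named explicitly here.
  have hsymm : @LinearMap.IsSymmetric ℝ (Fin m → ℝ) _ (toSeminormedAddCommGroup A⁻¹ hB.posSemidef)
      (toInnerProductSpace A⁻¹ hB.posSemidef) (mulVecLin N) := by
    intro x y
    change (A⁻¹ *ᵥ y) ⬝ᵥ star (N *ᵥ x) = (A⁻¹ *ᵥ (N *ᵥ y)) ⬝ᵥ star x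
    rw [star_trivial, star_trivial, mulVec_mulVec, hA.inv_mul_eq_transpose_mul_inv hNA,
      ← mulVec_mulVec, mulVec_transpose, ← dotProduct_mulVec]
  have hfr : Module.finrank ℝ (Fin m → ℝ) = m := Module.finrank_fin_fun ℝ
  have hli := (hsymm.eigenvectorBasis hfr).toBasis.linearIndependent
  rw [OrthonormalBasis.coe_toBasis] at hli
  exact ⟨_, _, hli, hsymm.apply_eigenvectorBasis hfr⟩

section Companion

variable {R : Type*} [CommRing R] {n : ℕ}

def companion (c : Fin (n + 1) → R) : Matrix (Fin (n + 1)) (Fin (n + 1)) R :=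
  Matrix.of fun i j => if i = Fin.last n then c j else if (j : ℕ) = i + 1 then 1 else 0

theorem companion_mulVec_castSucc (c w : Fin (n + 1) → R) (i : Fin n) :
    (companion c *ᵥ w) i.castSucc = w i.succ := by
  simp only [companion, mulVec, dotProduct, of_apply, if_neg (Fin.castSucc_ne_last i),
    Fin.val_castSucc, ite_mul, one_mul, zero_mul]
  simp [← Fin.val_succ, Fin.val_inj]

theorem companion_mulVec_last (c w : Fin (n + 1) → R) :
    (companion c *ᵥ w) (Fin.last n) = ∑ j, c j * w j := by
  simp [companion, mulVec, dotProduct]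

theorem eq_smul_pow_of_companion_mulVec_eq_smul {c w : Fin (n + 1) → R} {μ : R}
    (h : companion c *ᵥ w = μ • w) : w = w 0 • fun i : Fin (n + 1) => μ ^ (i : ℕ) := by
  ext i
  induction i using Fin.induction with
  | zero => simp
  | succ i ih =>
    have hrow := congrFun h i.castSucc
    rw [companion_mulVec_castSucc] at hrow
    simp only [Pi.smul_apply, smul_eq_mul, Fin.val_succ, Fin.val_castSucc] at hrow ih ⊢
    rw [hrow, ih, pow_succ]
    ring

theorem pow_eq_sum_of_companion_mulVec_eq_smul [IsDomain R] {c w : Fin (n + 1) → R} {μ : R}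
    (h : companion c *ᵥ w = μ • w) (hw : w ≠ 0) : μ ^ (n + 1) = ∑ j, c j * μ ^ (j : ℕ) := by
  have hpow := eq_smul_pow_of_companion_mulVec_eq_smul h
  have hw0 : w 0 ≠ 0 := fun h0 => hw (by rw [hpow, h0, zero_smul])
  have hlast := congrFun h (Fin.last n)
  rw [companion_mulVec_last, hpow] at hlast
  simp only [Pi.smul_apply, smul_eq_mul, Fin.val_last] at hlast
  refine mul_left_cancel₀ hw0 ?_
  calc w 0 * μ ^ (n + 1) = μ * (w 0 * μ ^ n) := by ring
    _ = ∑ j, c j * (w 0 * μ ^ (j : ℕ)) := hlast.symm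
    _ = w 0 * ∑ j, c j * μ ^ (j : ℕ) := by
      rw [Finset.mul_sum]
      exact Finset.sum_congr rfl fun j _ => by ring

end Companion

theorem exists_injective_roots_of_companion_mul_symm {n : ℕ} {c : Fin (n + 1) → ℝ}
    {A : Matrix (Fin (n + 1)) (Fin (n + 1)) ℝ} (hA : A.PosDef)
    (hcA : (companion c * A)ᵀ = companion c * A) :
    ∃ x : Fin (n + 1) → ℝ, Function.Injective x ∧
      ∀ l, x l ^ (n + 1) = ∑ j, c j * x l ^ (j : ℕ) := by
  obtain ⟨μ, u, hli, hu⟩ := hA.exists_linearIndependent_eigenvectors_of_mul_symm hcA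
  refine ⟨μ, fun a b hab => ?_,
    fun l => pow_eq_sum_of_companion_mulVec_eq_smul (hu l) (hli.ne_zero l)⟩
  by_contra hne
  have hpow l := eq_smul_pow_of_companion_mulVec_eq_smul (hu l)
  have hb0 : u b 0 ≠ 0 := fun h0 => hli.ne_zero b (by rw [hpow b, h0, zero_smul])
  have hparallel : u a = (u a 0 / u b 0) • u b :=
    calc u a = u a 0 • fun i : Fin (n + 1) => μ a ^ (i : ℕ) := hpow a
      _ = (u a 0 / u b 0) • u b 0 • fun i : Fin (n + 1) => μ b ^ (i : ℕ) := by
        rw [hab, smul_smul, div_mul_cancel₀ _ hb0]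
      _ = (u a 0 / u b 0) • u b := by rw [← hpow b]
  refine hli.notMem_span_image (s := {b}) (x := a) hne ?_
  rw [Set.image_singleton, hparallel]
  exact Submodule.smul_mem _ _ (Submodule.mem_span_singleton_self _)

section Hankel

variable {k r : ℕ} {v : ℕ → ℝ}

theorem hcorner_eq_submatrix_hankel (hr : r ≤ k + 1) :
    hcorner v r = (hankel k v).submatrix (Fin.castLE hr) (Fin.castLE hr) :=
  rfl

theorem exists_recurrence_of_seqRank (h : seqRank k v r) :
    ∃ c : Fin r → ℝ, ∀ m ≤ k, ∑ j, c j * v (m + j) = v (m + r) := by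
  have hspan := h.1
  rw [Set.image_setOf_lt_eq_range, Submodule.mem_span_range_iff_exists_fun] at hspan
  obtain ⟨c, hc⟩ := hspan
  refine ⟨c, fun m hm => ?_⟩
  simpa [hcol, Finset.sum_apply] using congrFun hc ⟨m, by omega⟩

theorem posDef_hcorner_of_seqRank (hpsd : (hankel k v).PosSemidef) (h : seqRank k v r)
    (hr : r ≤ k + 1) : (hcorner v r).PosDef := by
  rw [hcorner_eq_submatrix_hankel hr]
  exact hpsd.posDef_submatrix_of_linearIndependent _
    (linearIndependent_of_notMem_span_image_lt (hcol k v) r h.2)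

theorem phi_eq_of_recurrence (hA : IsUnit (hcorner v r)) (hr : r ≤ k + 1) {c : Fin r → ℝ}
    (hc : ∀ m ≤ k, ∑ j, c j * v (m + j) = v (m + r)) : phi v r = c := by
  have := hA.invertible
  refine inv_mulVec_eq_vec (funext fun i => ?_)
  rw [add_comm r, ← hc i (by omega)]
  simp [hcorner, mulVec, dotProduct, mul_comm]

theorem companion_mul_hcorner {n : ℕ} (hn : n + 1 ≤ k + 1) {c : Fin (n + 1) → ℝ}
    (hc : ∀ m ≤ k, ∑ j, c j * v (m + j) = v (m + (n + 1))) :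
    companion c * hcorner v (n + 1) = Matrix.of fun i j : Fin (n + 1) => v (i + j + 1) := by
  ext i j
  change (companion c *ᵥ fun m => hcorner v (n + 1) m j) i = _
  induction i using Fin.lastCases with
  | last =>
    rw [companion_mulVec_last]
    simp only [hcorner, of_apply, Fin.val_last]
    rw [show n + j + 1 = j + (n + 1) by omega, ← hc j (by omega)]
    simp [add_comm]
  | cast i =>
    rw [companion_mulVec_castSucc]
    simp [hcorner, add_right_comm]

end Hankel

theorem stmt2_general (k r : ℕ) (v : ℕ → ℝ)
    (hpsd : (hankel k v).PosSemidef)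
    (hr : r ≤ k) (hrank : seqRank k v r) :
    ∃ x : Fin r → ℝ, Function.Injective x ∧
      ∀ ℓ, x ℓ ^ r - ∑ i : Fin r, phi v r i * x ℓ ^ i.1 = 0 := by
  have hr' : r ≤ k + 1 := by omega
  have hA := posDef_hcorner_of_seqRank hpsd hrank hr'
  obtain ⟨c, hc⟩ := exists_recurrence_of_seqRank hrank
  rw [phi_eq_of_recurrence hA.isUnit hr' hc]
  cases r with
  | zero => exact ⟨finZeroElim, fun a => a.elim0, fun l => l.elim0⟩
  | succ n =>
    have hsymm : (companion c * hcorner v (n + 1))ᵀ = companion c * hcorner v (n + 1) := by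
      rw [companion_mul_hcorner hr' hc]
      ext i j
      simp [add_comm (i : ℕ)]
    obtain ⟨x, hx, hroot⟩ := exists_injective_roots_of_companion_mul_symm hA hsymm
    exact ⟨x, hx, fun l => sub_eq_zero.2 (hroot l)⟩

theorem stmt2 (k r : ℕ) (v : ℕ → ℝ) (hv0 : 0 < v 0)
    (hpsd : (hankel k v).PosSemidef) (hsing : (hankel k v).det = 0)
    (hr : r ≤ k) (hrank : seqRank k v r) :
    ∃ x : Fin r → ℝ, Function.Injective x ∧
      ∀ ℓ, x ℓ ^ r - ∑ i : Fin r, phi v r i * x ℓ ^ i.1 = 0 :=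
  stmt2_general k r v hpsd hr hrank
end
end

section
/- Let v = (v_0,...,v_{2k}) ∈ ℝ^{2k+1} with v_0 > 0 be a singular sequence of rank r ≤ k with A_v positive semidefinite. Then v is positively recursively generated (i.e., the recursion v_j = Σ_{i=0}^{r-1} φ_i v_{j-r+i} holds also for j = 2k) if and only if rank A_v(k-1) = rank A_v, where A_v(k-1) is the top-left k×k corner of A_v. -/
open Matrix MeasureTheory

noncomputable section

/-!
The first `r` columns `c_0, …, c_{r-1}` of `A_v` are independent and `c_r = ∑ φ_t c_t`, so the
defect `δ_m = v_{m+r} - ∑ φ_t v_{m+t}` of the recursion vanishes for `m ≤ k`, and positive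
semidefiniteness makes `A_v(r-1)` positive definite. Positivity pushes the recursion forward: for
`x = e_{σ+r} - ∑ φ_t e_{σ+t}` one has `(A_v x)_i = δ_{i+σ}`, so `xᵀ A_v x` only involves earlier
defects; once it vanishes, `A_v x = 0`. This gives `δ_m = 0` whenever `m + r < 2k`, hence
`rank A_v(k-1) = r`. Finally `rank A_v = r` iff `c_k - ∑ φ_t c_{k-r+t}`, whose entries are
`δ_{k-r}, …, δ_{2k-r}`, lies in the span of `c_0, …, c_{r-1}`; since `A_v(r-1)` is invertible and
the top `r` entries vanish, this happens iff the vector is zero, i.e. iff `δ_{2k-r} = 0`.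
-/

theorem linearIndependent_of_notMem_span_lt {K V : Type*} [DivisionRing K] [AddCommGroup V]
    [Module K V] {f : ℕ → V} {r : ℕ}
    (h : ∀ i < r, f i ∉ Submodule.span K (f '' {j | j < i})) :
    LinearIndependent K (fun t : Fin r => f t) := by
  induction r with
  | zero => exact linearIndependent_empty_type
  | succ r ih =>
    have hsnoc : (fun t : Fin (r + 1) => f t) = Fin.snoc (fun t : Fin r => f t) (f r) := by
      funext t
      induction t using Fin.lastCases <;> simp
    rw [hsnoc, linearIndependent_finSnoc, Set.range_comp' f Fin.val, Fin.range_val]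
    exact ⟨ih fun i hi => h i (by omega), h r r.lt_add_one⟩

namespace Matrix

theorem rank_eq_iff_col_mem_span {m n K : Type*} [Fintype m] [Fintype n] [Field K]
    {M : Matrix m n K} {r : ℕ} {b : Fin r → n}
    (hb : LinearIndependent K fun t => M.col (b t)) :
    M.rank = r ↔ ∀ j, M.col j ∈ Submodule.span K (Set.range fun t => M.col (b t)) := by
  have hle : Submodule.span K (Set.range fun t => M.col (b t)) ≤
      Submodule.span K (Set.range M.col) :=
    Submodule.span_mono (Set.range_comp_subset_range b M.col)
  rw [rank_eq_finrank_span_cols]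
  constructor
  · intro hrank j
    have hfin : Module.finrank K (Submodule.span K (Set.range M.col)) ≤
        Module.finrank K (Submodule.span K (Set.range fun t => M.col (b t))) := by
      rw [hrank, finrank_span_eq_card hb, Fintype.card_fin]
    rw [Submodule.eq_of_le_of_finrank_le hle hfin]
    exact Submodule.subset_span ⟨j, rfl⟩
  · intro hspan
    rw [le_antisymm (Submodule.span_le.2 (Set.range_subset_iff.2 hspan)) hle,
      finrank_span_eq_card hb, Fintype.card_fin]

section PosSemidef

open scoped ComplexOrder

variable {m n 𝕜 : Type*} [Fintype m] [Fintype n] [RCLike 𝕜]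

theorem PosSemidef.posDef_conjTranspose_mul_mul_same {A : Matrix n n 𝕜} (hA : A.PosSemidef)
    {B : Matrix n m 𝕜} (hB : Function.Injective (A * B).mulVec) : (Bᴴ * A * B).PosDef := by
  refine PosDef.of_dotProduct_mulVec_pos (isHermitian_conjTranspose_mul_mul _ hA.1) fun x hx => ?_
  have hABx : A *ᵥ (B *ᵥ x) ≠ 0 := by
    rw [mulVec_mulVec]
    exact fun h => hx (hB.eq_iff' (mulVec_zero _) |>.1 h)
  have hquad : star x ⬝ᵥ ((Bᴴ * A * B) *ᵥ x) = star (B *ᵥ x) ⬝ᵥ (A *ᵥ (B *ᵥ x)) := by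
    simp only [star_mulVec, dotProduct_mulVec, vecMul_vecMul, mulVec_mulVec, Matrix.mul_assoc]
  rw [hquad]
  exact (hA.dotProduct_mulVec_nonneg _).lt_of_ne fun h =>
    hABx ((hA.dotProduct_mulVec_zero_iff _).1 h.symm)

theorem PosSemidef.posDef_submatrix_of_linearIndependent_s3 [DecidableEq n] {A : Matrix n n 𝕜}
    (hA : A.PosSemidef) {e : m → n} (he : LinearIndependent 𝕜 fun i => A.col (e i)) :
    (A.submatrix e e).PosDef := by
  have hAE : A * (1 : Matrix n n 𝕜).submatrix id e = A.submatrix id e := by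
    ext; simp [mul_apply, one_apply]
  have hE : ((1 : Matrix n n 𝕜).submatrix id e)ᴴ * A * (1 : Matrix n n 𝕜).submatrix id e =
      A.submatrix e e := by
    ext; simp [mul_apply, one_apply]
  rw [← hE]
  exact hA.posDef_conjTranspose_mul_mul_same (by rwa [hAE, mulVec_injective_iff])

end PosSemidef

end Matrix

namespace Hankel

/-- The column `v_j` of the Hankel matrix with `n` rows. -/
def window (n : ℕ) (v : ℕ → ℝ) (j : ℕ) : Fin n → ℝ := fun i => v (i.1 + j)

def defect (v : ℕ → ℝ) (r m : ℕ) : ℝ := v (m + r) - ∑ t : Fin r, phi v r t * v (m + t.1)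

variable {v : ℕ → ℝ} {r : ℕ}

theorem window_restrict {n n' : ℕ} (h : n' ≤ n) (j : ℕ) :
    LinearMap.funLeft ℝ ℝ (Fin.castLE h) (window n v j) = window n' v j := rfl

theorem hankel_col (k : ℕ) (j : Fin (k + 1)) : (hankel k v).col j = window (k + 1) v j := rfl

theorem window_sub_sum_apply (n j : ℕ) (i : Fin n) :
    (window n v (j + r) - ∑ t : Fin r, phi v r t • window n v (j + t)) i = defect v r (i + j) := by
  simp [window, defect, Finset.sum_apply, add_assoc]

theorem window_eq_sum_of_defect {n j : ℕ} (h : ∀ i < n, defect v r (i + j) = 0) :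
    window n v (j + r) = ∑ t : Fin r, phi v r t • window n v (j + t) := by
  rw [← sub_eq_zero]
  funext i
  rw [window_sub_sum_apply]
  exact h i i.2

theorem window_mem_span_of_defect {n J : ℕ} (hD : ∀ m, m + r + 2 ≤ n + J → defect v r m = 0) :
    ∀ j < J, window n v j ∈ Submodule.span ℝ (Set.range fun t : Fin r => window n v t) := by
  intro j
  induction j using Nat.strong_induction_on with
  | _ j ih =>
    intro hj
    by_cases hjr : j < r
    · exact Submodule.subset_span ⟨⟨j, hjr⟩, rfl⟩
    obtain ⟨s, rfl⟩ : ∃ s, j = s + r := ⟨j - r, by omega⟩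
    rw [window_eq_sum_of_defect fun i hi => hD _ (by omega)]
    exact Submodule.sum_smul_mem _ _ fun t _ => ih _ (by omega) (by omega)

theorem linearIndependent_window {n : ℕ} (hr : r ≤ n) (hunit : IsUnit (hcorner v r)) :
    LinearIndependent ℝ fun t : Fin r => window n v t := by
  refine LinearIndependent.of_comp (LinearMap.funLeft ℝ ℝ (Fin.castLE hr)) ?_
  exact linearIndependent_cols_of_isUnit hunit

theorem eq_zero_of_mem_span_window {n : ℕ} (hr : r ≤ n) (hunit : IsUnit (hcorner v r))
    {w : Fin n → ℝ} (hw : w ∈ Submodule.span ℝ (Set.range fun t : Fin r => window n v t))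
    (hw0 : ∀ i : Fin n, i.1 < r → w i = 0) : w = 0 := by
  obtain ⟨b, rfl⟩ := (Submodule.mem_span_range_iff_exists_fun ℝ).1 hw
  have hb : ∑ t, b t • window r v t = 0 := by
    funext i
    simpa [window, Finset.sum_apply] using hw0 (Fin.castLE hr i) i.2
  have hb0 := Fintype.linearIndependent_iff.1 (linearIndependent_cols_of_isUnit hunit) b hb
  simp [hb0]

theorem hcorner_posDef {k : ℕ} (hr : r ≤ k) (hpsd : (hankel k v).PosSemidef)
    (hli : LinearIndependent ℝ fun t : Fin r => window (k + 1) v t) : (hcorner v r).PosDef :=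
  hpsd.posDef_submatrix_of_linearIndependent_s3 (e := Fin.castLE (by omega)) hli

theorem phi_eq_of_window_eq_sum (hunit : IsUnit (hcorner v r)) {a : Fin r → ℝ}
    (ha : ∑ t, a t • window r v t = window r v r) : phi v r = a := by
  have := hunit.invertible
  refine inv_mulVec_eq_vec (funext fun i => ?_)
  have hi := congrFun ha i
  simp only [window, Finset.sum_apply, Pi.smul_apply, smul_eq_mul] at hi
  simp only [mulVec, dotProduct, hcorner, of_apply, add_comm r, ← hi, mul_comm]

theorem defect_eq_zero_of_le {k : ℕ} (hr : r ≤ k) (hunit : IsUnit (hcorner v r))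
    (hspan : window (k + 1) v r ∈ Submodule.span ℝ (window (k + 1) v '' {j | j < r})) :
    ∀ m ≤ k, defect v r m = 0 := by
  change window (k + 1) v r ∈ Submodule.span ℝ (window (k + 1) v '' Set.Iio r) at hspan
  rw [← Fin.range_val, ← Set.range_comp] at hspan
  obtain ⟨a, ha⟩ := (Submodule.mem_span_range_iff_exists_fun ℝ).1 hspan
  simp only [Function.comp_apply] at ha
  have hphi : phi v r = a := by
    refine phi_eq_of_window_eq_sum hunit ?_
    have := congrArg (LinearMap.funLeft ℝ ℝ (Fin.castLE (by omega : r ≤ k + 1))) ha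
    simpa only [map_sum, map_smul, window_restrict] using this
  intro m hm
  have := window_sub_sum_apply (v := v) (r := r) (k + 1) 0 ⟨m, by omega⟩
  simp only [zero_add, hphi, ha, sub_self, Pi.zero_apply, add_zero] at this
  exact this.symm

theorem defect_eq_zero_of_shift {k σ : ℕ} (hpsd : (hankel k v).PosSemidef) (hσ : σ + r ≤ k)
    (h : ∀ j ≤ r, defect v r (σ + j + σ) = 0) : ∀ i ≤ k, defect v r (i + σ) = 0 := by
  let x : Fin (k + 1) → ℝ := Pi.single ⟨σ + r, by omega⟩ 1 -
    ∑ t : Fin r, phi v r t • Pi.single ⟨σ + t, by omega⟩ 1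
  have hAx : ∀ i, (hankel k v *ᵥ x) i = defect v r (i + σ) := by
    intro i
    rw [← window_sub_sum_apply]
    simp [x, mulVec_sub, mulVec_sum, mulVec_smul, hankel_col]
  have hq : star x ⬝ᵥ (hankel k v *ᵥ x) = 0 := by
    simp [x, sub_dotProduct, sum_dotProduct, smul_dotProduct, hAx, h]
  intro i hi
  rw [← hAx ⟨i, by omega⟩, (hpsd.dotProduct_mulVec_zero_iff x).1 hq]
  rfl

theorem defect_eq_zero_of_add_lt {k : ℕ} (hpsd : (hankel k v).PosSemidef)
    (hbase : ∀ m ≤ k, defect v r m = 0) : ∀ m, m + r < 2 * k → defect v r m = 0 := by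
  intro m
  induction m using Nat.strong_induction_on with
  | _ m ih =>
    intro hm
    by_cases hmk : m ≤ k
    · exact hbase m hmk
    obtain ⟨σ, rfl⟩ : ∃ σ, m = k + σ := ⟨m - k, by omega⟩
    exact defect_eq_zero_of_shift hpsd (by omega) (fun j hj => ih _ (by omega) (by omega)) k le_rfl

theorem rank_hcorner {k : ℕ} (hr : r ≤ k) (hunit : IsUnit (hcorner v r))
    (hD : ∀ m, m + r < 2 * k → defect v r m = 0) : (hcorner v k).rank = r := by
  have hcols : (fun t : Fin r => (hcorner v k).col (Fin.castLE hr t)) =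
      fun t : Fin r => window k v t := rfl
  rw [rank_eq_iff_col_mem_span (b := Fin.castLE hr) (hcols ▸ linearIndependent_window hr hunit),
    hcols]
  intro j
  exact window_mem_span_of_defect (fun m hm => hD m (by omega)) j j.2

theorem rank_hankel_eq_iff {k : ℕ} (hr : r ≤ k)
    (hli : LinearIndependent ℝ fun t : Fin r => window (k + 1) v t)
    (hunit : IsUnit (hcorner v r)) (hD : ∀ m, m + r < 2 * k → defect v r m = 0) :
    (hankel k v).rank = r ↔ defect v r (2 * k - r) = 0 := by
  have hcols : (fun t : Fin r => (hankel k v).col (Fin.castLE (by omega) t)) =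
      fun t : Fin r => window (k + 1) v t := rfl
  rw [rank_eq_iff_col_mem_span (b := Fin.castLE (by omega)) (hcols ▸ hli), hcols]
  constructor
  · intro hspan
    have hmem : ∀ j ≤ k, window (k + 1) v j ∈
        Submodule.span ℝ (Set.range fun t : Fin r => window (k + 1) v t) :=
      fun j hj => hspan ⟨j, by omega⟩
    have hw := eq_zero_of_mem_span_window (by omega) hunit
      (sub_mem (hmem (k - r + r) (by omega))
        (Submodule.sum_smul_mem _ (phi v r) fun t _ => hmem (k - r + t) (by omega)))
      (fun i hi => by rw [window_sub_sum_apply]; exact hD _ (by omega))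
    have := window_sub_sum_apply (v := v) (r := r) (k + 1) (k - r) (Fin.last k)
    rwa [hw, Fin.val_last, Pi.zero_apply, eq_comm, show k + (k - r) = 2 * k - r by omega] at this
  · intro h2k j
    refine window_mem_span_of_defect (fun m hm => ?_) j j.2
    rcases Nat.lt_or_ge (m + r) (2 * k) with hlt | hge
    · exact hD m hlt
    · rwa [show m = 2 * k - r by omega]

end Hankel

theorem stmt3_general (k r : ℕ) (v : ℕ → ℝ)
    (hpsd : (hankel k v).PosSemidef)
    (hr : r ≤ k) (hrank : seqRank k v r) :
    (v (2*k) = ∑ i : Fin r, phi v r i * v (2*k - r + i.1)) ↔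
      (hcorner v k).rank = (hankel k v).rank := by
  have hli : LinearIndependent ℝ fun t : Fin r => Hankel.window (k + 1) v t :=
    linearIndependent_of_notMem_span_lt hrank.2
  have hunit : IsUnit (hcorner v r) := (Hankel.hcorner_posDef hr hpsd hli).isUnit
  have hD := Hankel.defect_eq_zero_of_add_lt hpsd (Hankel.defect_eq_zero_of_le hr hunit hrank.1)
  rw [Hankel.rank_hcorner hr hunit hD, @eq_comm ℕ r, Hankel.rank_hankel_eq_iff hr hli hunit hD,
    Hankel.defect, Nat.sub_add_cancel (by omega : r ≤ 2 * k), sub_eq_zero]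

theorem stmt3 (k r : ℕ) (v : ℕ → ℝ) (hv0 : 0 < v 0)
    (hpsd : (hankel k v).PosSemidef) (hsing : (hankel k v).det = 0)
    (hr : r ≤ k) (hrank : seqRank k v r) :
    (v (2*k) = ∑ i : Fin r, phi v r i * v (2*k - r + i.1)) ↔
      (hcorner v k).rank = (hankel k v).rank :=
  stmt3_general k r v hpsd hr hrank
end
end

section
/- Let v = (v_0,...,v_{2k}) ∈ ℝ^{2k+1} be a singular sequence. If v is recursively generated (both positively and negatively recursively generated), then rank v = rank v^{(rev)} where v^{(rev)} = (v_{2k},...,v_0) is the reversed sequence, and the leading recursion coefficient φ_0 is nonzero. -/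
/-! The recursion makes every column of `A_v` a combination of the first `r` columns, which are
independent by minimality of `r`, so `rank A_v = r`. Reversing `v` reverses the rows and columns
of `A_v`, so `rank v^(rev) = rank A_v = rank v`.

If `φ₀ = 0`, the recursion never reaches column `0`, so columns `1, …, k` lie in the span of the
`r - 1` columns `1, …, r - 1`. But the last `r` columns of `A_v` are the first `r` columns of
`A_{v^(rev)}` with reversed entries, hence independent. -/

open Matrix MeasureTheory

noncomputable section

lemma hcol_image_eq_range (k : ℕ) (v : ℕ → ℝ) (m : ℕ) :
    hcol k v '' {j | j < m} = Set.range (fun i : Fin m => hcol k v i.1) := by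
  ext x
  constructor
  · rintro ⟨j, hj, rfl⟩; exact ⟨⟨j, hj⟩, rfl⟩
  · rintro ⟨i, rfl⟩; exact ⟨i.1, i.2, rfl⟩

lemma linearIndependent_hcol_of_notMem_span {k r : ℕ} {v : ℕ → ℝ}
    (h : ∀ i < r, hcol k v i ∉ Submodule.span ℝ (hcol k v '' {j | j < i})) :
    LinearIndependent ℝ (fun i : Fin r => hcol k v i.1) := by
  induction r with
  | zero => exact linearIndependent_empty_type
  | succ n ih =>
    have hsnoc : (fun i : Fin (n+1) => hcol k v i.1) =
        Fin.snoc (fun i : Fin n => hcol k v i.1) (hcol k v n) := by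
      funext i
      refine Fin.lastCases ?_ (fun i => ?_) i <;> simp
    rw [hsnoc, linearIndependent_finSnoc, ← hcol_image_eq_range]
    exact ⟨ih fun i hi => h i (by omega), h n (by omega)⟩

section Recursion

variable {k r : ℕ} {v : ℕ → ℝ} {c : Fin r → ℝ}
  (hrec : ∀ j, r ≤ j → j ≤ 2*k → v j = ∑ i : Fin r, c i * v (j - r + i.1))
include hrec

lemma hcol_eq_sum_of_recursion {j : ℕ} (hrj : r ≤ j) (hjk : j ≤ k) :
    hcol k v j = ∑ i : Fin r, c i • hcol k v (j - r + i.1) := by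
  funext m
  have hm : m.1 ≤ k := Fin.is_le m
  simp only [hcol, Finset.sum_apply, Pi.smul_apply, smul_eq_mul]
  rw [hrec (m.1 + j) (by omega) (by omega)]
  refine Finset.sum_congr rfl fun i _ => ?_
  rw [show m.1 + (j - r + i.1) = m.1 + j - r + i.1 by omega]

lemma hcol_mem_of_recursion {a : ℕ} (hc : ∀ i : Fin r, i.1 < a → c i = 0)
    {S : Submodule ℝ (Fin (k+1) → ℝ)} (hS : ∀ j, a ≤ j → j < r → hcol k v j ∈ S) :
    ∀ j, a ≤ j → j ≤ k → hcol k v j ∈ S := by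
  intro j
  induction j using Nat.strong_induction_on with
  | _ j ih =>
    intro haj hjk
    rcases lt_or_ge j r with hjr | hrj
    · exact hS j haj hjr
    rw [hcol_eq_sum_of_recursion hrec hrj hjk]
    refine Submodule.sum_mem _ fun i _ => ?_
    rcases lt_or_ge i.1 a with hia | hai
    · rw [hc i hia, zero_smul]
      exact S.zero_mem
    · exact S.smul_mem _ (ih _ (by omega) (by omega) (by omega))

lemma rank_hankel_of_recursion (hr : r ≤ k) (hrank : seqRank k v r) :
    (hankel k v).rank = r := by
  have hspan : Submodule.span ℝ (Set.range (hankel k v).col)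
      = Submodule.span ℝ (hcol k v '' {j | j < r}) := by
    refine le_antisymm (Submodule.span_le.2 ?_) (Submodule.span_mono ?_)
    · rintro x ⟨j, rfl⟩
      refine hcol_mem_of_recursion hrec (a := 0) (by simp) (fun j _ hj => ?_) j.1 (Nat.zero_le _)
        (Fin.is_le j)
      exact Submodule.subset_span ⟨j, hj, rfl⟩
    · rintro x ⟨j, hj, rfl⟩
      exact ⟨⟨j, lt_of_lt_of_le hj (Nat.le_succ_of_le hr)⟩, rfl⟩
  rw [Matrix.rank_eq_finrank_span_cols, hspan, hcol_image_eq_range,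
    finrank_span_eq_card (linearIndependent_hcol_of_notMem_span hrank.2), Fintype.card_fin]

lemma recursion_coeff_zero_ne_zero (hr0 : 0 < r) (hr : r ≤ k)
    (hind : LinearIndependent ℝ (fun i : Fin r => hcol k v (k - i.1))) :
    c ⟨0, hr0⟩ ≠ 0 := by
  intro hc0
  set T := Submodule.span ℝ (Set.range fun i : Fin (r-1) => hcol k v (i.1 + 1))
  have hmemT : ∀ j, 1 ≤ j → j ≤ k → hcol k v j ∈ T := by
    refine hcol_mem_of_recursion hrec (a := 1) (fun i hi => ?_) (fun j hj hjr => ?_)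
    · rwa [show i = ⟨0, hr0⟩ from Fin.ext (Nat.lt_one_iff.1 hi)]
    · exact Submodule.subset_span ⟨⟨j - 1, by omega⟩, by simp only; congr; omega⟩
  have hle : Submodule.span ℝ (Set.range fun i : Fin r => hcol k v (k - i.1)) ≤ T :=
    Submodule.span_le.2 fun _ ⟨i, hi⟩ => hi ▸ hmemT _ (by omega) (by omega)
  have hT : Module.finrank ℝ T ≤ r - 1 := by
    simpa [Set.finrank] using
      finrank_range_le_card (R := ℝ) fun i : Fin (r-1) => hcol k v (i.1 + 1)
  have := Submodule.finrank_mono hle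
  rw [finrank_span_eq_card hind, Fintype.card_fin] at this
  omega

end Recursion

lemma hankel_rev (k : ℕ) (v : ℕ → ℝ) :
    hankel k (fun j => v (2*k - j)) = (hankel k v).submatrix Fin.revPerm Fin.revPerm := by
  ext i j
  simp only [hankel, Matrix.of_apply, Matrix.submatrix_apply, Fin.revPerm_apply, Fin.val_rev]
  congr 1
  omega

lemma hcol_rev (k : ℕ) (v : ℕ → ℝ) {i : ℕ} (hi : i ≤ k) :
    hcol k (fun j => v (2*k - j)) i = hcol k v (k - i) ∘ Fin.rev := by
  funext m
  simp only [hcol, Function.comp_apply, Fin.val_rev]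
  congr 1
  omega

lemma linearIndependent_hcol_sub_of_rev {k r : ℕ} {v : ℕ → ℝ} (hr : r ≤ k)
    (h : LinearIndependent ℝ (fun i : Fin r => hcol k (fun j => v (2*k - j)) i.1)) :
    LinearIndependent ℝ (fun i : Fin r => hcol k v (k - i.1)) := by
  refine LinearIndependent.of_comp (LinearMap.funLeft ℝ ℝ Fin.rev) ?_
  convert h using 1
  funext i
  exact (hcol_rev k v (by omega)).symm

theorem stmt6_general (k r rrev : ℕ) (v : ℕ → ℝ)
    (hr0 : 0 < r) (hr : r ≤ k) (hrank : seqRank k v r)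
    (hprg : ∀ j, r ≤ j → j ≤ 2*k → v j = ∑ i : Fin r, phi v r i * v (j - r + i.1))
    (hrrev : rrev ≤ k) (hrankrev : seqRank k (fun j => v (2*k - j)) rrev)
    (hnrg : ∀ j, rrev ≤ j → j ≤ 2*k →
      v (2*k - j) = ∑ i : Fin rrev,
        phi (fun j' => v (2*k - j')) rrev i * v (2*k - (j - rrev + i.1))) :
    r = rrev ∧ phi v r ⟨0, hr0⟩ ≠ 0 := by
  have hrr : r = rrev := by
    rw [← rank_hankel_of_recursion hprg hr hrank,
      ← rank_hankel_of_recursion (v := fun j => v (2*k - j)) hnrg hrrev hrankrev,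
      hankel_rev, Matrix.rank_submatrix]
  subst hrr
  exact ⟨rfl, recursion_coeff_zero_ne_zero hprg hr0 hr
    (linearIndependent_hcol_sub_of_rev hr (linearIndependent_hcol_of_notMem_span hrankrev.2))⟩

theorem stmt6 (k r rrev : ℕ) (v : ℕ → ℝ) (hsing : (hankel k v).det = 0)
    (hr0 : 0 < r) (hr : r ≤ k) (hrank : seqRank k v r)
    (hpd : (hcorner v r).PosDef)
    (hprg : ∀ j, r ≤ j → j ≤ 2*k → v j = ∑ i : Fin r, phi v r i * v (j - r + i.1))
    (hrrev : rrev ≤ k) (hrankrev : seqRank k (fun j => v (2*k - j)) rrev)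
    (hpdrev : (hcorner (fun j => v (2*k - j)) rrev).PosDef)
    (hnrg : ∀ j, rrev ≤ j → j ≤ 2*k →
      v (2*k - j) = ∑ i : Fin rrev,
        phi (fun j' => v (2*k - j')) rrev i * v (2*k - (j - rrev + i.1))) :
    r = rrev ∧ phi v r ⟨0, hr0⟩ ≠ 0 :=
  stmt6_general k r rrev v hr0 hr hrank hprg hrrev hrankrev hnrg
end
end

section
/- Let k₁, k₂ ∈ ℕ and β = (β_{-2k₁},...,β_{2k₂}) with β_{-2k₁} > 0. If β admits a representing measure supported on ℝ∖{0}, then it admits one that is r-atomic where r = rank β (the rank of the sequence β viewed as a Hankel sequence of length 2(k₁+k₂)+1). -/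
open Matrix MeasureTheory

noncomputable section

/-- `r = rank β`: `k+1` if the Hankel matrix is nonsingular, and otherwise the
smallest index of a column lying in the span of the preceding ones. -/
def seqRankFull (k : ℕ) (v : ℕ → ℝ) (r : ℕ) : Prop :=
  (IsUnit (hankel k v).det ∧ r = k + 1) ∨ ((hankel k v).det = 0 ∧ seqRank k v r)

/-!
Dividing `μ` by `x ^ (2 k₁)` turns `β` into an ordinary truncated moment sequence
`w m = β (m - 2 k₁)`, `m ≤ 2 n` with `n = k₁ + k₂`, of a measure `ν` with `ν {0} = 0`; let `L` be
its Riesz functional `X ^ m ↦ w m`.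

If the Hankel matrix of `w` is singular, a kernel vector gives a polynomial `Q ≠ 0` of degree
`≤ n` with `L (Q ^ 2) = 0`, so `ν` is carried by finitely many nonzero roots of `Q`; the moments of
a measure with `s ≤ n` atoms have rank `s`, hence `s = r`.

If it is invertible, there is a monic `p` of degree `n + 1` with `L (X ^ i * p) = 0` for `i < n`
and `p 0 ≠ 0`: the value of `L (X ^ n * p)` is a free parameter, and `0` is a root for every
choice of it only if `L` is degenerate. The usual sign-change argument, with the positivity of
`L`, shows that `p` has `n + 1` distinct real roots. Gauss quadrature at these nodes, with weights
`L ℓₓ = L (ℓₓ ^ 2) > 0` for the Lagrange basis `ℓₓ`, reproduces all moments up to `2 n`.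
-/

namespace Polynomial

section LinearFunctional

variable {K M : Type*} [Field K] [AddCommGroup M] [Module K M]

theorem linearMap_eq_of_natDegree_lt {f g : K[X] →ₗ[K] M} {N : ℕ}
    (h : ∀ i < N, f (X ^ i) = g (X ^ i)) {q : K[X]} (hq : q.natDegree < N) : f q = g q := by
  rw [q.as_sum_range' N hq]
  simp only [map_sum, ← smul_X_eq_monomial, map_smul]
  exact Finset.sum_congr rfl fun i hi => by rw [h i (Finset.mem_range.mp hi)]

theorem map_mul_eq_zero_of_natDegree_lt (L : K[X] →ₗ[K] K) {p q : K[X]} {N : ℕ}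
    (h : ∀ i < N, L (X ^ i * p) = 0) (hq : q.natDegree < N) : L (q * p) = 0 :=
  linearMap_eq_of_natDegree_lt (f := L ∘ₗ LinearMap.mulRight K p) (g := 0) h hq

/-- Gauss quadrature. -/
theorem map_eq_sum_map_basis_mul_eval [DecidableEq K] (L : K[X] →ₗ[K] K) {n : ℕ} {S : Finset K}
    {p : K[X]} (hp : p.Monic) (hpdeg : p.natDegree = n + 1) (hS : S.card = n + 1)
    (hroot : ∀ x ∈ S, p.IsRoot x) (horth : ∀ i < n, L (X ^ i * p) = 0) {P : K[X]}
    (hP : P.natDegree ≤ 2 * n) :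
    L P = ∑ x ∈ S, L (Lagrange.basis S id x) * P.eval x := by
  have hdecomp := modByMonic_add_div P p
  have hquot : L (p * (P /ₘ p)) = 0 := by
    rcases eq_or_ne (P /ₘ p) 0 with h0 | h0
    · rw [h0, mul_zero, map_zero]
    have : p.natDegree ≤ P.natDegree :=
      natDegree_le_natDegree (not_lt.mp ((divByMonic_eq_zero_iff hp).not.mp h0))
    rw [mul_comm]
    exact map_mul_eq_zero_of_natDegree_lt L horth (by rw [natDegree_divByMonic _ hp]; omega)
  have hrem : (P %ₘ p).degree < S.card := by
    rw [hS, ← hpdeg, ← degree_eq_natDegree hp.ne_zero]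
    exact degree_modByMonic_lt _ hp
  conv_lhs => rw [← hdecomp, map_add, hquot, add_zero,
    Lagrange.eq_interpolate (Set.injOn_id _) hrem, Lagrange.interpolate_apply, map_sum]
  refine Finset.sum_congr rfl fun x hx => ?_
  have : (P %ₘ p).eval x = P.eval x := by
    conv_rhs => rw [← hdecomp, eval_add, eval_mul, (hroot x hx).eq_zero, zero_mul, add_zero]
  rw [← smul_eq_C_mul, map_smul, smul_eq_mul, mul_comm, id, this]

end LinearFunctional

namespace Monic

open Filter

variable {p : ℝ[X]}

theorem eval_pos_of_forall_not_isRoot (hp : p.Monic) (hroot : ∀ x, ¬p.IsRoot x) (x : ℝ) :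
    0 < p.eval x := by
  rcases Nat.eq_zero_or_pos p.natDegree with hd | hd
  · simp [hp.natDegree_eq_zero.mp hd]
  obtain ⟨x₀, hx₀⟩ := ((p.tendsto_atTop_of_leadingCoeff_nonneg
    (natDegree_pos_iff_degree_pos.mp hd) (by simp [hp.leadingCoeff])).eventually_ge_atTop 1).exists
  by_contra! hx
  obtain ⟨z, -, hz⟩ := intermediate_value_uIcc (a := x) (b := x₀) p.continuous.continuousOn
    (Set.mem_uIcc.mpr (Or.inl ⟨hx, by linarith⟩))
  exact hroot z hz

theorem even_natDegree_of_eval_nonneg (hp : p.Monic) (h : ∀ x, 0 ≤ p.eval x) :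
    Even p.natDegree := by
  by_contra hodd
  rw [Nat.not_even_iff_odd] at hodd
  have hq : (p.comp (-X)).leadingCoeff = -1 := by
    rw [leadingCoeff_comp (by simp), hp.leadingCoeff]
    simp [hodd.neg_one_pow]
  have hdeg : 0 < (p.comp (-X)).degree := by
    rw [← natDegree_pos_iff_degree_pos, natDegree_comp]
    simpa using hodd.pos
  obtain ⟨x, hx⟩ := ((tendsto_atBot_of_leadingCoeff_nonpos _ hdeg
    (by rw [hq]; norm_num)).eventually_le_atBot (-1)).exists
  have := h (-x)
  simp only [eval_comp, eval_neg, eval_X] at hx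
  linarith

/-- `T` is the set of roots of odd multiplicity, built by peeling off one root at a time. -/
theorem exists_isRoot_eval_mul_prod_nonneg (hp : p.Monic) :
    ∃ T : Finset ℝ, (∀ a ∈ T, p.IsRoot a) ∧ ∀ x, 0 ≤ (p * ∏ a ∈ T, (X - C a)).eval x := by
  classical
  induction hd : p.natDegree using Nat.strong_induction_on generalizing p with
  | _ d ih =>
  by_cases hroot : ∃ a, p.IsRoot a
  swap
  · exact ⟨∅, by simp, fun x => by
      simpa using (hp.eval_pos_of_forall_not_isRoot (not_exists.mp hroot) x).le⟩
  obtain ⟨a, ha⟩ := hroot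
  set q := p /ₘ (X - C a)
  have hpq : (X - C a) * q = p := mul_divByMonic_eq_iff_isRoot.mpr ha
  have hq : q.Monic := (monic_X_sub_C a).of_mul_monic_left (hpq ▸ hp)
  have hdq : q.natDegree < d := by
    rw [← hd, ← hpq, (monic_X_sub_C a).natDegree_mul hq, natDegree_X_sub_C]
    omega
  obtain ⟨T, hT, hnonneg⟩ := ih _ hdq hq rfl
  have hroots : ∀ b ∈ T, p.IsRoot b := fun b hb => by
    rw [← hpq, IsRoot, eval_mul, (hT b hb).eq_zero, mul_zero]
  by_cases haT : a ∈ T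
  · refine ⟨T.erase a, fun b hb => hroots b (Finset.mem_of_mem_erase hb), fun x => ?_⟩
    rw [← hpq, mul_comm (X - C a), mul_assoc, Finset.mul_prod_erase T (fun b => X - C b) haT]
    exact hnonneg x
  · refine ⟨insert a T, Finset.forall_mem_insert _ _ _ |>.mpr ⟨ha, hroots⟩, fun x => ?_⟩
    rw [Finset.prod_insert haT, ← hpq]
    have := hnonneg x
    simp only [eval_mul] at this ⊢
    nlinarith [mul_self_nonneg (eval x (X - C a))]

end Monic

end Polynomial

namespace Hankel

open Polynomial

def riesz (w : ℕ → ℝ) : ℝ[X] →ₗ[ℝ] ℝ :=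
  lsum fun m => w m • LinearMap.id

variable {w : ℕ → ℝ} {n : ℕ}

@[simp]
theorem riesz_monomial (m : ℕ) (c : ℝ) : riesz w (monomial m c) = w m * c := by
  simp [riesz, sum_monomial_index]

@[simp]
theorem riesz_X_pow (m : ℕ) : riesz w (X ^ m) = w m := by
  simp [← monomial_one_right_eq_X_pow]

theorem riesz_eq_sum_range {P : ℝ[X]} {N : ℕ} (hP : P.natDegree < N) :
    riesz w P = ∑ m ∈ Finset.range N, w m * P.coeff m := by
  conv_lhs => rw [P.as_sum_range' N hP]
  simp

theorem riesz_eq_sum_eval {N : ℕ} {S : Finset ℝ} {ρ : ℝ → ℝ}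
    (h : ∀ m ≤ N, w m = ∑ x ∈ S, ρ x * x ^ m) {P : ℝ[X]} (hP : P.natDegree ≤ N) :
    riesz w P = ∑ x ∈ S, ρ x * P.eval x := by
  simpa using linearMap_eq_of_natDegree_lt (f := riesz w) (g := ∑ x ∈ S, ρ x • leval x)
    (fun m hm => by simpa using h m (Nat.lt_succ_iff.mp hm)) (Nat.lt_succ_of_le hP)

def hankelOp (n : ℕ) (w : ℕ → ℝ) : ℝ[X] →ₗ[ℝ] Fin (n + 1) → ℝ :=
  LinearMap.pi fun i => riesz w ∘ₗ LinearMap.mulLeft ℝ (X ^ (i : ℕ))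

@[simp]
theorem hankelOp_apply (P : ℝ[X]) (i : Fin (n + 1)) :
    hankelOp n w P i = riesz w (X ^ (i : ℕ) * P) := rfl

theorem hankelOp_X_pow (j : ℕ) : hankelOp n w (X ^ j) = hcol n w j := by
  ext i
  simp [hcol, ← pow_add]

theorem hankel_mulVec (c : Fin (n + 1) → ℝ) :
    hankel n w *ᵥ c = hankelOp n w (ofFn (n + 1) c) := by
  ext i
  simp [mulVec, dotProduct, hankel, ofFn_eq_sum_monomial, Finset.mul_sum, X_pow_mul_monomial,
    add_comm]

theorem dotProduct_hankelOp {Q : ℝ[X]} (hQ : Q.natDegree ≤ n) (R : ℝ[X]) :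
    toFn (n + 1) Q ⬝ᵥ hankelOp n w R = riesz w (Q * R) := by
  conv_rhs => rw [Q.as_sum_range_C_mul_X_pow' (Nat.lt_succ_of_le hQ)]
  rw [Finset.sum_mul, map_sum, ← Fin.sum_univ_eq_sum_range]
  simp [dotProduct, toFn, ← smul_eq_C_mul]

theorem exists_hankelOp_eq (hdet : IsUnit (hankel n w).det) (v : Fin (n + 1) → ℝ) :
    ∃ R : ℝ[X], R.natDegree ≤ n ∧ hankelOp n w R = v :=
  ⟨ofFn (n + 1) ((hankel n w)⁻¹ *ᵥ v), Nat.lt_succ_iff.mp (ofFn_natDegree_lt n.succ_pos _), by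
    rw [← hankel_mulVec, mulVec_mulVec, mul_nonsing_inv _ hdet, one_mulVec]⟩

theorem eq_zero_of_hankelOp_eq_zero (hdet : IsUnit (hankel n w).det) {R : ℝ[X]}
    (hR : R.natDegree ≤ n) (h : hankelOp n w R = 0) : R = 0 := by
  rw [← ofFn_comp_toFn_eq_id_of_natDegree_lt (Nat.lt_succ_of_le hR)] at h ⊢
  rw [← hankel_mulVec] at h
  rw [eq_zero_of_mulVec_eq_zero hdet.ne_zero h, map_zero]

theorem hcol_mem_span_iff {r : ℕ} :
    hcol n w r ∈ Submodule.span ℝ (hcol n w '' {j | j < r}) ↔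
      ∃ P : ℝ[X], P.Monic ∧ P.natDegree = r ∧ hankelOp n w P = 0 := by
  classical
  have hspan : Submodule.span ℝ (hcol n w '' {j | j < r}) =
      (degreeLT ℝ r).map (hankelOp n w) := by
    rw [degreeLT_eq_span_X_pow, ← Submodule.span_image, Finset.coe_image, Finset.coe_range,
      ← Set.image_comp]
    simp [hankelOp_X_pow, Set.Iio]
  rw [hspan, Submodule.mem_map, ← hankelOp_X_pow]
  constructor
  · rintro ⟨Q, hQ, hQr⟩
    have hQr' : Q.degree < (X ^ r : ℝ[X]).degree := by simpa using mem_degreeLT.mp hQ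
    refine ⟨X ^ r - Q, monic_X_pow_sub (mem_degreeLT.mp hQ), ?_, by rw [map_sub, hQr, sub_self]⟩
    exact natDegree_eq_of_degree_eq_some
      (by rw [degree_sub_eq_left_of_degree_lt hQr', degree_X_pow])
  · rintro ⟨P, hPm, hPr, hP⟩
    refine ⟨X ^ r - P, mem_degreeLT.mpr ?_, by rw [map_sub, hP, sub_zero]⟩
    have hdeg : (X ^ r : ℝ[X]).degree = P.degree := by
      rw [degree_X_pow, degree_eq_natDegree hPm.ne_zero, hPr]
    simpa using degree_sub_lt_left hdeg (pow_ne_zero r X_ne_zero)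
      (by rw [leadingCoeff_X_pow, hPm.leadingCoeff])

theorem seqRank_unique {r r' : ℕ} (h : seqRank n w r) (h' : seqRank n w r') : r = r' := by
  rcases lt_trichotomy r r' with hlt | heq | hgt
  · exact absurd h.1 (h'.2 r hlt)
  · exact heq
  · exact absurd h'.1 (h.2 r' hgt)

def IsAtomicRep (w : ℕ → ℝ) (N : ℕ) (S : Finset ℝ) (ρ : ℝ → ℝ) : Prop :=
  (∀ x ∈ S, 0 < ρ x) ∧ ∀ m ≤ N, w m = ∑ x ∈ S, ρ x * x ^ m

theorem seqRank_card_of_isAtomicRep {S : Finset ℝ} {ρ : ℝ → ℝ} (h : IsAtomicRep w (2 * n) S ρ)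
    (hS : S.card ≤ n) : seqRank n w S.card := by
  refine ⟨hcol_mem_span_iff.mpr ⟨Lagrange.nodal S id, Lagrange.nodal_monic,
    Lagrange.natDegree_nodal, ?_⟩, fun i hi hmem => ?_⟩
  · ext i
    have hdeg : (X ^ (i : ℕ) * Lagrange.nodal S id).natDegree ≤ 2 * n := by
      rw [(monic_X_pow _).natDegree_mul Lagrange.nodal_monic, natDegree_X_pow,
        Lagrange.natDegree_nodal]
      omega
    rw [hankelOp_apply, riesz_eq_sum_eval h.2 hdeg]
    refine Finset.sum_eq_zero fun x hx => ?_
    have : (Lagrange.nodal S id).eval x = 0 := Lagrange.eval_nodal_at_node (v := id) hx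
    rw [eval_mul, this, mul_zero, mul_zero]
  · obtain ⟨P, hPm, hPi, hP⟩ := hcol_mem_span_iff.mp hmem
    have hPP : riesz w (P * P) = 0 :=
      map_mul_eq_zero_of_natDegree_lt _ (N := n + 1) (fun j hj => congrFun hP ⟨j, hj⟩) (by omega)
    rw [riesz_eq_sum_eval h.2 (natDegree_mul_le.trans (by omega)),
      Finset.sum_eq_zero_iff_of_nonneg fun x hx => by
        rw [eval_mul]; exact mul_nonneg (h.1 x hx).le (mul_self_nonneg _)] at hPP
    have hroots : S.val ⊆ P.roots := fun x hx => by
      have := hPP x hx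
      rw [eval_mul, mul_eq_zero, mul_self_eq_zero] at this
      exact (mem_roots hPm.ne_zero).mpr (this.resolve_left (h.1 x hx).ne')
    have := card_le_degree_of_subset_roots hroots
    omega

/-- `U` represents evaluation at `0` with respect to `L`. -/
theorem coeff_zero_eq_dotProduct_hankelOp {U R : ℝ[X]} (hU : U.natDegree ≤ n)
    (hU0 : hankelOp n w U = Pi.single 0 1) (hR : R.natDegree ≤ n) :
    R.coeff 0 = toFn (n + 1) U ⬝ᵥ hankelOp n w R := by
  rw [dotProduct_hankelOp hU, mul_comm, ← dotProduct_hankelOp hR, hU0, dotProduct_single, mul_one]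
  simp [toFn]

theorem exists_monic_eval_zero_eq (hdet : IsUnit (hankel n w).det) {U : ℝ[X]}
    (hU : U.natDegree ≤ n) (hU0 : hankelOp n w U = Pi.single 0 1) (s : ℝ) :
    ∃ p : ℝ[X], p.Monic ∧ p.natDegree = n + 1 ∧ (∀ i < n, riesz w (X ^ i * p) = 0) ∧
      p.eval 0 = U.coeff n * s - riesz w (U * X ^ (n + 1)) := by
  obtain ⟨R, hR, hRv⟩ :=
    exists_hankelOp_eq hdet (hankelOp n w (X ^ (n + 1)) - Pi.single (Fin.last n) s)
  have hRdeg : R.degree < ↑(n + 1) :=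
    (degree_le_of_natDegree_le hR).trans_lt (WithBot.coe_lt_coe.mpr n.lt_succ_self)
  have hp : hankelOp n w (X ^ (n + 1) - R) = Pi.single (Fin.last n) s := by
    rw [map_sub, hRv, sub_sub_cancel]
  refine ⟨X ^ (n + 1) - R, monic_X_pow_sub hRdeg, ?_, fun i hi => ?_, ?_⟩
  · rw [natDegree_sub_eq_left_of_natDegree_lt (by rw [natDegree_X_pow]; omega), natDegree_X_pow]
  · have := congrFun hp ⟨i, by omega⟩
    rwa [hankelOp_apply, Pi.single_eq_of_ne (by simp [Fin.ext_iff]; omega)] at this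
  · rw [eval_sub, eval_pow, eval_X, zero_pow n.succ_ne_zero, zero_sub,
      ← coeff_zero_eq_eval_zero, coeff_zero_eq_dotProduct_hankelOp hU hU0 hR, hRv,
      dotProduct_sub, dotProduct_hankelOp hU, dotProduct_single]
    simp [toFn]

theorem exists_monic_quasiOrthogonal (hdet : IsUnit (hankel n w).det) :
    ∃ p : ℝ[X], p.Monic ∧ p.natDegree = n + 1 ∧ p.eval 0 ≠ 0 ∧
      ∀ i < n, riesz w (X ^ i * p) = 0 := by
  obtain ⟨U, hU, hU0⟩ := exists_hankelOp_eq hdet (Pi.single 0 1)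
  by_cases hUn : U.coeff n = 0
  swap
  · obtain ⟨p, hpm, hpd, horth, hp0⟩ :=
      exists_monic_eval_zero_eq hdet hU hU0 ((riesz w (U * X ^ (n + 1)) + 1) / U.coeff n)
    refine ⟨p, hpm, hpd, ?_, horth⟩
    rw [hp0, mul_div_cancel₀ _ hUn]
    norm_num
  obtain ⟨p, hpm, hpd, horth, hp0⟩ := exists_monic_eval_zero_eq hdet hU hU0 0
  refine ⟨p, hpm, hpd, ?_, horth⟩
  rw [hp0, mul_zero, zero_sub, neg_ne_zero]
  intro hzero
  have hU' : U ≠ 0 := by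
    rintro rfl
    simpa using congrFun hU0 0
  have hXU : hankelOp n w (X * U) = 0 := by
    ext i
    rw [hankelOp_apply, ← mul_assoc, ← pow_succ, Pi.zero_apply]
    rcases lt_or_eq_of_le (Nat.lt_succ_iff.mp i.2) with hi | hi
    · have := congrFun hU0 ⟨i + 1, by omega⟩
      rwa [hankelOp_apply, Pi.single_eq_of_ne (Fin.ne_of_val_ne (Nat.succ_ne_zero _))] at this
    · rwa [hi, mul_comm]
  refine hU' (mul_eq_zero.mp (eq_zero_of_hankelOp_eq_zero hdet ?_ hXU) |>.resolve_left X_ne_zero)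
  have : U.natDegree ≠ n := fun h => leadingCoeff_ne_zero.mpr hU' (by rw [leadingCoeff, h, hUn])
  rw [natDegree_X_mul hU']
  omega

def IsRepresentingMeasure (w : ℕ → ℝ) (N : ℕ) (ν : Measure ℝ) : Prop :=
  ∀ m ≤ N, Integrable (fun x => x ^ m) ν ∧ w m = ∫ x, x ^ m ∂ν

namespace IsRepresentingMeasure

variable {ν : Measure ℝ} {N : ℕ}

theorem integrable_eval (h : IsRepresentingMeasure w N ν) {P : ℝ[X]} (hP : P.natDegree ≤ N) :
    Integrable (fun x => P.eval x) ν := by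
  simp_rw [eval_eq_sum_range' (Nat.lt_succ_of_le hP)]
  exact integrable_finsetSum _ fun m hm =>
    (h m (Nat.lt_succ_iff.mp (Finset.mem_range.mp hm))).1.const_mul _

theorem riesz_eq_integral (h : IsRepresentingMeasure w N ν) {P : ℝ[X]} (hP : P.natDegree ≤ N) :
    riesz w P = ∫ x, P.eval x ∂ν := by
  have hmem : ∀ m ∈ Finset.range (N + 1), m ≤ N := fun m hm =>
    Nat.lt_succ_iff.mp (Finset.mem_range.mp hm)
  simp_rw [eval_eq_sum_range' (Nat.lt_succ_of_le hP)]
  rw [integral_finsetSum _ fun m hm => (h m (hmem m hm)).1.const_mul _,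
    riesz_eq_sum_range (Nat.lt_succ_of_le hP)]
  refine Finset.sum_congr rfl fun m hm => ?_
  rw [integral_const_mul, ← (h m (hmem m hm)).2, mul_comm]

theorem ae_eval_eq_zero_of_riesz_eq_zero (h : IsRepresentingMeasure w N ν) {P : ℝ[X]}
    (hP : P.natDegree ≤ N) (hnonneg : ∀ x, 0 ≤ P.eval x) (hL : riesz w P = 0) :
    ∀ᵐ x ∂ν, P.eval x = 0 := by
  rw [h.riesz_eq_integral hP] at hL
  exact (integral_eq_zero_iff_of_nonneg hnonneg (h.integrable_eval hP)).mp hL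

theorem ae_eval_eq_zero_of_riesz_mul_self_eq_zero (h : IsRepresentingMeasure w (2 * n) ν)
    {Q : ℝ[X]} (hQ : Q.natDegree ≤ n) (hL : riesz w (Q * Q) = 0) : ∀ᵐ x ∂ν, Q.eval x = 0 :=
  (h.ae_eval_eq_zero_of_riesz_eq_zero (natDegree_mul_le.trans (by omega))
    (fun x => by rw [eval_mul]; exact mul_self_nonneg _) hL).mono
    fun x hx => by rwa [eval_mul, mul_self_eq_zero] at hx

theorem hankelOp_eq_zero_of_ae (h : IsRepresentingMeasure w (2 * n) ν) {Q : ℝ[X]}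
    (hQ : Q.natDegree ≤ n) (hae : ∀ᵐ x ∂ν, Q.eval x = 0) : hankelOp n w Q = 0 := by
  ext i
  have hdeg : (X ^ (i : ℕ) * Q).natDegree ≤ 2 * n :=
    natDegree_mul_le.trans (by rw [natDegree_X_pow]; omega)
  rw [hankelOp_apply, h.riesz_eq_integral hdeg, Pi.zero_apply]
  exact integral_eq_zero_of_ae (hae.mono fun x hx => by simp [hx])

theorem exists_isAtomicRep_of_ae_eval_eq_zero (h : IsRepresentingMeasure w N ν)
    (hν0 : ν {0} = 0) {P : ℝ[X]} (hP : P ≠ 0) (hae : ∀ᵐ x ∂ν, P.eval x = 0) :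
    ∃ S : Finset ℝ, ∃ ρ : ℝ → ℝ, 0 ∉ S ∧ (∀ x ∈ S, P.IsRoot x) ∧ IsAtomicRep w N S ρ := by
  classical
  set F := P.roots.toFinset
  have hF : ν.restrict F = ν :=
    Measure.restrict_eq_self_of_ae_mem (hae.mono fun x hx => by simpa [F, hP] using hx)
  refine ⟨F.filter fun x => 0 < ν.real {x}, fun x => ν.real {x},
    fun h0 => (Finset.mem_filter.mp h0).2.ne' (by simp [measureReal_def, hν0]),
    fun x hx => by simpa [F, hP] using (Finset.mem_filter.mp hx).1,
    fun x hx => (Finset.mem_filter.mp hx).2, fun m hm => ?_⟩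
  have hmoment : ∫ x, x ^ m ∂ν = ∑ x ∈ F, ν.real {x} • x ^ m := by
    rw [← setIntegral_finset F (h m hm).1.integrableOn, hF]
  rw [(h m hm).2, hmoment]
  refine (Finset.sum_filter_of_ne fun x _ hx => ?_).symm
  exact measureReal_nonneg.lt_of_ne (left_ne_zero_of_mul hx).symm

theorem exists_isAtomicRep_of_det_eq_zero (h : IsRepresentingMeasure w (2 * n) ν)
    (hν0 : ν {0} = 0) (hdet : (hankel n w).det = 0) {r : ℕ} (hr : seqRank n w r) :
    ∃ S : Finset ℝ, ∃ ρ : ℝ → ℝ, S.card = r ∧ 0 ∉ S ∧ IsAtomicRep w (2 * n) S ρ := by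
  obtain ⟨c, hc0, hc⟩ := exists_mulVec_eq_zero_iff.mpr hdet
  set Q := ofFn (n + 1) c
  have hQ0 : Q ≠ 0 := fun hQ => hc0 (injective_ofFn _ (hQ.trans (map_zero _).symm))
  have hQdeg : Q.natDegree ≤ n := Nat.lt_succ_iff.mp (ofFn_natDegree_lt n.succ_pos c)
  have hQQ : riesz w (Q * Q) = 0 := by
    rw [hankel_mulVec] at hc
    exact map_mul_eq_zero_of_natDegree_lt _ (N := n + 1) (fun i hi => congrFun hc ⟨i, hi⟩)
      (by omega)
  obtain ⟨S, ρ, hS0, hSroot, hSrep⟩ := h.exists_isAtomicRep_of_ae_eval_eq_zero hν0 hQ0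
    (h.ae_eval_eq_zero_of_riesz_mul_self_eq_zero hQdeg hQQ)
  have hcard : S.card ≤ n :=
    (card_le_degree_of_subset_roots fun x hx => (mem_roots hQ0).mpr (hSroot x hx)).trans hQdeg
  exact ⟨S, ρ, seqRank_unique (seqRank_card_of_isAtomicRep hSrep hcard) hr, hS0, hSrep⟩

section PositiveDefinite

variable (h : IsRepresentingMeasure w (2 * n) ν) (hdet : IsUnit (hankel n w).det)
include h hdet

theorem eq_zero_of_ae_eval_eq_zero {Q : ℝ[X]} (hQ : Q.natDegree ≤ n)
    (hae : ∀ᵐ x ∂ν, Q.eval x = 0) : Q = 0 :=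
  eq_zero_of_hankelOp_eq_zero hdet hQ (h.hankelOp_eq_zero_of_ae hQ hae)

theorem riesz_mul_self_pos {Q : ℝ[X]} (hQ0 : Q ≠ 0) (hQ : Q.natDegree ≤ n) :
    0 < riesz w (Q * Q) := by
  have hdeg : (Q * Q).natDegree ≤ 2 * n := natDegree_mul_le.trans (by omega)
  have hnonneg : 0 ≤ riesz w (Q * Q) := by
    rw [h.riesz_eq_integral hdeg]
    exact integral_nonneg fun x => by rw [eval_mul]; exact mul_self_nonneg _
  exact hnonneg.lt_of_ne fun hL => hQ0 (h.eq_zero_of_ae_eval_eq_zero hdet hQ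
    (h.ae_eval_eq_zero_of_riesz_mul_self_eq_zero hQ hL.symm))

theorem le_card_roots_toFinset {P : ℝ[X]} (hP : P ≠ 0) (hae : ∀ᵐ x ∂ν, P.eval x = 0) :
    n + 1 ≤ P.roots.toFinset.card := by
  by_contra! hcard
  refine (Lagrange.nodal_monic (s := P.roots.toFinset) (v := id)).ne_zero
    (h.eq_zero_of_ae_eval_eq_zero hdet (by rw [Lagrange.natDegree_nodal]; omega) ?_)
  filter_upwards [hae] with x hx
  exact Lagrange.eval_nodal_at_node (v := id) (by simpa [hP] using hx)

theorem card_roots_toFinset_of_quasiOrthogonal {p : ℝ[X]} (hp : p.Monic)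
    (hpdeg : p.natDegree = n + 1) (horth : ∀ i < n, riesz w (X ^ i * p) = 0) :
    p.roots.toFinset.card = n + 1 := by
  refine le_antisymm (hpdeg ▸ (Multiset.toFinset_card_le _).trans (card_roots' p)) ?_
  obtain ⟨T, hT, hnonneg⟩ := hp.exists_isRoot_eval_mul_prod_nonneg
  have hs : (∏ a ∈ T, (X - C a)).Monic := Lagrange.nodal_monic (s := T) (v := id)
  have hsdeg : (∏ a ∈ T, (X - C a)).natDegree = T.card := Lagrange.natDegree_nodal (v := id)
  have hTsub : T ⊆ p.roots.toFinset := fun a ha => by simpa [hp.ne_zero] using hT a ha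
  have hTcard : T.card ≤ n + 1 := (Finset.card_le_card hTsub).trans
    (hpdeg ▸ (Multiset.toFinset_card_le _).trans (card_roots' p))
  -- a nonnegative monic polynomial has even degree, so `#T ≠ n`
  obtain ⟨k, hk⟩ := (hp.mul hs).even_natDegree_of_eval_nonneg hnonneg
  rw [hp.natDegree_mul hs, hpdeg, hsdeg] at hk
  rcases (by omega : T.card = n + 1 ∨ T.card < n) with hfull | hsmall
  · exact hfull ▸ Finset.card_le_card hTsub
  have hdeg : (p * ∏ a ∈ T, (X - C a)).natDegree ≤ 2 * n := by
    rw [hp.natDegree_mul hs]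
    omega
  have hL : riesz w (p * ∏ a ∈ T, (X - C a)) = 0 := by
    rw [mul_comm]
    exact map_mul_eq_zero_of_natDegree_lt _ horth (by omega)
  refine h.le_card_roots_toFinset hdet hp.ne_zero ?_
  filter_upwards [h.ae_eval_eq_zero_of_riesz_eq_zero hdeg hnonneg hL] with x hx
  rw [eval_mul, mul_eq_zero, eval_prod, Finset.prod_eq_zero_iff] at hx
  obtain hx | ⟨a, ha, hxa⟩ := hx
  · exact hx
  · rw [eval_sub, eval_X, eval_C, sub_eq_zero] at hxa
    exact hxa ▸ hT a ha

theorem exists_isAtomicRep_of_isUnit_det :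
    ∃ S : Finset ℝ, ∃ ρ : ℝ → ℝ, S.card = n + 1 ∧ 0 ∉ S ∧ IsAtomicRep w (2 * n) S ρ := by
  obtain ⟨p, hp, hpdeg, hp0, horth⟩ := exists_monic_quasiOrthogonal hdet
  set S := p.roots.toFinset
  have hS : S.card = n + 1 := h.card_roots_toFinset_of_quasiOrthogonal hdet hp hpdeg horth
  have hroot : ∀ x ∈ S, p.IsRoot x := fun x hx => by simpa [S, hp.ne_zero] using hx
  have hquad {P : ℝ[X]} (hP : P.natDegree ≤ 2 * n) :=
    map_eq_sum_map_basis_mul_eval (riesz w) hp hpdeg hS hroot horth hP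
  refine ⟨S, fun x => riesz w (Lagrange.basis S id x), hS, fun h0 => hp0 (hroot 0 h0),
    fun x hx => ?_, fun m hm => ?_⟩
  · have hbasis := Lagrange.natDegree_basis (Set.injOn_id _) hx
    rw [hS] at hbasis
    have hsquare : riesz w (Lagrange.basis S id x * Lagrange.basis S id x) =
        riesz w (Lagrange.basis S id x) := by
      rw [hquad (natDegree_mul_le.trans (by omega)), Finset.sum_eq_single x]
      · have : (Lagrange.basis S id x).eval x = 1 :=
          Lagrange.eval_basis_self (Set.injOn_id _) hx
        rw [eval_mul, this, mul_one, mul_one]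
      · intro y hy hyx
        have : (Lagrange.basis S id x).eval y = 0 :=
          Lagrange.eval_basis_of_ne (v := id) hyx.symm hy
        rw [eval_mul, this, zero_mul, mul_zero]
      · exact fun hx' => absurd hx hx'
    show 0 < riesz w _
    rw [← hsquare]
    exact h.riesz_mul_self_pos hdet (Lagrange.basis_ne_zero (Set.injOn_id _) hx) hbasis.le
  · rw [← riesz_X_pow (w := w) m, hquad (P := X ^ m) (by simpa using hm)]
    simp

end PositiveDefinite

theorem exists_isAtomicRep_card_eq (h : IsRepresentingMeasure w (2 * n) ν) (hν0 : ν {0} = 0)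
    {r : ℕ} (hr : seqRankFull n w r) :
    ∃ S : Finset ℝ, ∃ ρ : ℝ → ℝ, S.card = r ∧ 0 ∉ S ∧ IsAtomicRep w (2 * n) S ρ := by
  rcases hr with ⟨hdet, rfl⟩ | ⟨hdet, hr⟩
  · exact h.exists_isAtomicRep_of_isUnit_det hdet
  · exact h.exists_isAtomicRep_of_det_eq_zero hν0 hdet hr

end IsRepresentingMeasure

section NegativeMoments

variable {k₁ k₂ : ℕ} {β : ℤ → ℝ} {μ : Measure ℝ}

def shiftDensity (k₁ : ℕ) (x : ℝ) : NNReal :=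
  Real.toNNReal (x ^ (-(2 * k₁ : ℤ)))

theorem measurable_shiftDensity : Measurable (shiftDensity k₁) := by
  unfold shiftDensity
  fun_prop

theorem shiftDensity_smul_pow (m : ℕ) {x : ℝ} (hx : x ≠ 0) :
    shiftDensity k₁ x • x ^ m = x ^ ((m : ℤ) - 2 * k₁) := by
  rw [shiftDensity, NNReal.smul_def,
    Real.coe_toNNReal _ ((even_two_mul (k₁ : ℤ)).neg.zpow_nonneg x), smul_eq_mul,
    ← zpow_natCast, ← zpow_add₀ hx]
  ring_nf

theorem isRepresentingMeasure_withDensity (hμ0 : μ {0} = 0)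
    (hμ : ∀ m : ℤ, -(2 * k₁ : ℤ) ≤ m → m ≤ 2 * k₂ →
      Integrable (fun x : ℝ => x ^ m) μ ∧ β m = ∫ x, x ^ m ∂μ) :
    IsRepresentingMeasure (fun m => β ((m : ℤ) - 2 * k₁)) (2 * (k₁ + k₂))
      (μ.withDensity fun x => shiftDensity k₁ x) := by
  intro m hm
  have hae : (fun x => shiftDensity k₁ x • x ^ m) =ᵐ[μ] fun x => x ^ ((m : ℤ) - 2 * k₁) :=
    (measure_eq_zero_iff_ae_notMem.mp hμ0).mono fun x hx => shiftDensity_smul_pow m hx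
  obtain ⟨hint, hβ⟩ := hμ ((m : ℤ) - 2 * k₁) (by omega) (by omega)
  rw [integrable_withDensity_iff_integrable_smul measurable_shiftDensity,
    integral_withDensity_eq_integral_smul measurable_shiftDensity, integral_congr_ae hae]
  exact ⟨hint.congr hae.symm, hβ⟩

theorem eq_sum_zpow_of_isAtomicRep {S : Finset ℝ} {ρ : ℝ → ℝ} (hS0 : 0 ∉ S)
    (h : IsAtomicRep (fun m => β ((m : ℤ) - 2 * k₁)) (2 * (k₁ + k₂)) S ρ) {m : ℤ}
    (hm₁ : -(2 * k₁ : ℤ) ≤ m) (hm₂ : m ≤ 2 * k₂) :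
    β m = ∑ x ∈ S, ρ x * x ^ (2 * k₁) * x ^ m := by
  have hm : (((m + 2 * k₁).toNat : ℕ) : ℤ) = m + 2 * k₁ := Int.toNat_of_nonneg (by omega)
  have := h.2 (m + 2 * k₁).toNat (by omega)
  dsimp only at this
  rw [hm, add_sub_cancel_right] at this
  rw [this]
  refine Finset.sum_congr rfl fun x hx => ?_
  have hx0 : x ≠ 0 := fun h0 => hS0 (h0 ▸ hx)
  rw [mul_assoc, ← zpow_natCast, ← zpow_natCast, ← zpow_add₀ hx0, hm]
  push_cast
  ring_nf

end NegativeMoments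

end Hankel

theorem stmt13_general (k₁ k₂ : ℕ) (β : ℤ → ℝ)
    (hmeas : ∃ μ : Measure ℝ, μ {0} = 0 ∧
        ∀ m : ℤ, -(2*k₁ : ℤ) ≤ m → m ≤ 2*k₂ →
          Integrable (fun x : ℝ => x ^ m) μ ∧ β m = ∫ x, x ^ m ∂μ)
    (r : ℕ) (hr : seqRankFull (k₁ + k₂) (fun m => β ((m : ℤ) - 2*k₁)) r) :
    ∃ x : Fin r → ℝ, Function.Injective x ∧ (∀ ℓ, x ℓ ≠ 0) ∧
      ∃ ρ : Fin r → ℝ, (∀ ℓ, 0 < ρ ℓ) ∧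
        ∀ m : ℤ, -(2*k₁ : ℤ) ≤ m → m ≤ 2*k₂ →
          β m = ∑ ℓ, ρ ℓ * x ℓ ^ m := by
  obtain ⟨μ, hμ0, hμ⟩ := hmeas
  obtain ⟨S, ρ, hcard, hS0, hrep⟩ :=
    (Hankel.isRepresentingMeasure_withDensity hμ0 hμ).exists_isAtomicRep_card_eq
      (withDensity_absolutelyContinuous μ _ hμ0) hr
  let e : Fin r ≃ S := (S.equivFin.trans (finCongr hcard)).symm
  have hne (ℓ : Fin r) : (e ℓ : ℝ) ≠ 0 := fun h0 => hS0 (h0 ▸ (e ℓ).2)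
  refine ⟨fun ℓ => e ℓ, Subtype.val_injective.comp e.injective, hne,
    fun ℓ => ρ (e ℓ) * (e ℓ : ℝ) ^ (2 * k₁),
    fun ℓ => mul_pos (hrep.1 _ (e ℓ).2) ((even_two_mul k₁).pow_pos (hne ℓ)), fun m hm₁ hm₂ => ?_⟩
  rw [Hankel.eq_sum_zpow_of_isAtomicRep hS0 hrep hm₁ hm₂, ← Finset.sum_coe_sort S,
    ← e.sum_comp]

theorem stmt13 (k₁ k₂ : ℕ) (hk₁ : 0 < k₁) (hk₂ : 0 < k₂) (β : ℤ → ℝ)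
    (hb : 0 < β (-(2*k₁ : ℤ)))
    (hmeas : ∃ μ : Measure ℝ, μ {0} = 0 ∧
        ∀ m : ℤ, -(2*k₁ : ℤ) ≤ m → m ≤ 2*k₂ →
          Integrable (fun x : ℝ => x ^ m) μ ∧ β m = ∫ x, x ^ m ∂μ)
    (r : ℕ) (hr : seqRankFull (k₁ + k₂) (fun m => β ((m : ℤ) - 2*k₁)) r) :
    ∃ x : Fin r → ℝ, Function.Injective x ∧ (∀ ℓ, x ℓ ≠ 0) ∧
      ∃ ρ : Fin r → ℝ, (∀ ℓ, 0 < ρ ℓ) ∧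
        ∀ m : ℤ, -(2*k₁ : ℤ) ≤ m → m ≤ 2*k₂ →
          β m = ∑ ℓ, ρ ℓ * x ℓ ^ m :=
  stmt13_general k₁ k₂ β hmeas r hr
end
end

section
/- Let k ≥ 2 and let β^{(2k)} be a 2-dimensional sequence of degree 2k with β_{0,0} > 0 whose moment matrix M(k) is positive semidefinite and recursively generated and satisfies the column relation XY = 1. Let B = {Y^k, ..., Y, 1, X, ..., X^k}. If rank (M(k))_B < 2k, then rank (M(k))_{B∖{X^k}} = rank (M(k))_B = rank (M(k))_{B∖{Y^k}}. -/
open Matrix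

noncomputable section

/-- Index set for the moment matrix `M(k)`: monomials `x^i y^j` with `i + j ≤ k`. -/
def MIdx (k : ℕ) := {p : Fin (k+1) × Fin (k+1) // p.1.1 + p.2.1 ≤ k}

instance (k : ℕ) : Fintype (MIdx k) := by unfold MIdx; infer_instance
instance (k : ℕ) : DecidableEq (MIdx k) := by unfold MIdx; infer_instance

/-- The moment matrix `M(k)` of a bivariate sequence. -/
def M2 (k : ℕ) (β : ℕ → ℕ → ℝ) : Matrix (MIdx k) (MIdx k) ℝ :=
  Matrix.of fun a b => β (a.1.1.1 + b.1.1.1) (a.1.2.1 + b.1.2.1)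

/-- The column vector `p(X,Y)` of the moment matrix `M(k)` associated to
a polynomial `p ∈ ℝ[x,y]`. -/
def colVec (k : ℕ) (β : ℕ → ℕ → ℝ) (p : MvPolynomial (Fin 2) ℝ) :
    MIdx k → ℝ :=
  fun a => ∑ m ∈ p.support, p.coeff m * β (a.1.1.1 + m 0) (a.1.2.1 + m 1)

/-- `M(k)` is recursively generated. -/
def RG2 (k : ℕ) (β : ℕ → ℕ → ℝ) : Prop :=
  ∀ p q : MvPolynomial (Fin 2) ℝ,
    p.totalDegree ≤ k → q.totalDegree ≤ k → (p * q).totalDegree ≤ k →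
    colVec k β p = 0 → colVec k β (p * q) = 0

/-- Exponents of the monomial in position `t` of `B = {Y^k, …, Y, 1, X, …, X^k}`. -/
def mB (k t : ℕ) : ℕ × ℕ := if t ≤ k then (0, k - t) else (t - k, 0)

/-- The compression `(M(k))_B` of the moment matrix to `B`. -/
def MB (k : ℕ) (β : ℕ → ℕ → ℝ) : Matrix (Fin (2*k+1)) (Fin (2*k+1)) ℝ :=
  Matrix.of fun s t =>
    β ((mB k s.1).1 + (mB k t.1).1) ((mB k s.1).2 + (mB k t.1).2)

/-- The compression `(M(k))_{B ∖ {X^k}}`. -/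
def MBnoX (k : ℕ) (β : ℕ → ℕ → ℝ) : Matrix (Fin (2*k)) (Fin (2*k)) ℝ :=
  Matrix.of fun s t =>
    β ((mB k s.1).1 + (mB k t.1).1) ((mB k s.1).2 + (mB k t.1).2)

/-- The compression `(M(k))_{B ∖ {Y^k}}`. -/
def MBnoY (k : ℕ) (β : ℕ → ℕ → ℝ) : Matrix (Fin (2*k)) (Fin (2*k)) ℝ :=
  Matrix.of fun s t =>
    β ((mB k (s.1+1)).1 + (mB k (t.1+1)).1) ((mB k (s.1+1)).2 + (mB k (t.1+1)).2)

/-!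
For a symmetric matrix, deleting the row and column of an index `i` does not change the rank as
soon as some kernel vector has a nonzero `i`-th entry. So it suffices to find kernel vectors of
`(M(k))_B` with nonzero `X^k`-entry and with nonzero `Y^k`-entry; by the symmetry `x ↔ y`, which
reverses `B`, the first kind is enough.

Since `M(k) ⪰ 0`, a kernel vector `c` of `(M(k))_B` gives the column relation `p_c(X,Y) = 0`, where
`p_c = ∑ c_t b_t` and `b_t` is the monomial in position `t` of `B`. If `c` vanishes at `Y^k` and `X^k`, then
`deg p_c ≤ k - 1`, and `x p_c` is, modulo `xy - 1`, the polynomial of the vector obtained by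
shifting `c` one step towards `X^k`. Recursive generation and `XY = 1` then put the shifted vector
in the kernel again. As `rank (M(k))_B < 2k`, the kernel contains some `c ≠ 0` with `c_{Y^k} = 0`,
and shifting it repeatedly must eventually produce a kernel vector with nonzero `X^k`-entry.
-/

namespace Matrix

open scoped ComplexOrder MatrixOrder in
theorem PosSemidef.submatrix_mulVec_eq_zero {m n 𝕜 : Type*} [Fintype m] [Fintype n] [RCLike 𝕜]
    {A : Matrix n n 𝕜} (hA : A.PosSemidef) (e : m → n) {x : m → 𝕜}
    (hx : A.submatrix e e *ᵥ x = 0) : A.submatrix id e *ᵥ x = 0 := by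
  classical
  obtain ⟨B, rfl⟩ := CStarAlgebra.nonneg_iff_eq_star_mul_self.mp hA.nonneg
  set C := B.submatrix id e
  have hC : (star B * B).submatrix e e = Cᴴ * C := by
    rw [star_eq_conjTranspose, ← submatrix_mul_equiv _ _ e (Equiv.refl _) e]
    rfl
  have hCx : C *ᵥ x = 0 := by
    rw [hC, ← mulVec_mulVec] at hx
    have := congrArg (star x ⬝ᵥ ·) hx
    simp only [dotProduct_mulVec _ Cᴴ, vecMul_conjTranspose, star_star, dotProduct_zero] at this
    exact dotProduct_star_self_eq_zero.mp this
  rw [star_eq_conjTranspose, ← submatrix_mul_equiv _ _ id (Equiv.refl _) e, ← mulVec_mulVec]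
  exact (congrArg _ hCx).trans (mulVec_zero _)

section Field

variable {m K : Type*} [Field K]

theorem exists_mulVec_eq_zero_apply_eq_zero {n : Type*} [Fintype m] [Fintype n] [DecidableEq n]
    {A : Matrix m n K} (hA : A.rank + 1 < Fintype.card n) (i : n) :
    ∃ c ≠ 0, A *ᵥ c = 0 ∧ c i = 0 := by
  set V := LinearMap.ker A.mulVecLin
  have hV : Module.finrank K K < Module.finrank K V := by
    have := LinearMap.finrank_range_add_finrank_ker A.mulVecLin
    rw [Module.finrank_fintype_fun_eq_card] at this
    change A.rank + Module.finrank K V = _ at this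
    rw [Module.finrank_self]
    omega
  obtain ⟨⟨c, hcV⟩, hc, hc0⟩ := Submodule.exists_mem_ne_zero_of_ne_bot
    (LinearMap.ker_ne_bot_of_finrank_lt (f := (LinearMap.proj i).comp V.subtype) hV)
  exact ⟨c, fun h => hc0 (Subtype.ext h), hcV, hc⟩

variable {n : ℕ}

theorem mulVec_eq_add_submatrix_succAbove (B : Matrix m (Fin (n + 1)) K) (i : Fin (n + 1))
    (z : Fin (n + 1) → K) :
    B *ᵥ z = fun s => B s i * z i + (B.submatrix id i.succAbove *ᵥ (z ∘ i.succAbove)) s := by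
  funext s
  exact Fin.sum_univ_succAbove _ i

theorem rank_submatrix_id_succAbove [Fintype m] {B : Matrix m (Fin (n + 1)) K}
    {u : Fin (n + 1) → K} (hu : B *ᵥ u = 0) {i : Fin (n + 1)} (hi : u i ≠ 0) :
    (B.submatrix id i.succAbove).rank = B.rank := by
  suffices LinearMap.range (B.submatrix id i.succAbove).mulVecLin = LinearMap.range B.mulVecLin by
    rw [rank, rank, this]
  apply le_antisymm
  · rintro _ ⟨y, rfl⟩
    refine ⟨Fin.insertNth i 0 y, ?_⟩
    simp [mulVec_eq_add_submatrix_succAbove B i, Function.comp_def]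
  · rintro _ ⟨x, rfl⟩
    set z := x - (x i / u i) • u
    have hz : z i = 0 := by simp [z, div_mul_cancel₀ _ hi]
    have hBz : B *ᵥ z = B *ᵥ x := by simp [z, mulVec_sub, mulVec_smul, hu]
    refine ⟨z ∘ i.succAbove, ?_⟩
    simp only [mulVecLin_apply, ← hBz, mulVec_eq_add_submatrix_succAbove B i z, hz, mul_zero,
      zero_add]

theorem rank_submatrix_succAbove_of_transpose_eq {A : Matrix (Fin (n + 1)) (Fin (n + 1)) K}
    (hA : Aᵀ = A) {u : Fin (n + 1) → K} (hu : A *ᵥ u = 0) {i : Fin (n + 1)} (hi : u i ≠ 0) :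
    (A.submatrix i.succAbove i.succAbove).rank = A.rank := by
  have hu' : A.submatrix i.succAbove id *ᵥ u = 0 := funext fun s => congrFun hu (i.succAbove s)
  calc (A.submatrix i.succAbove i.succAbove).rank
      = ((A.submatrix i.succAbove id).submatrix id i.succAbove).rank := rfl
    _ = (A.submatrix i.succAbove id).rank := rank_submatrix_id_succAbove hu' hi
    _ = (Aᵀ.submatrix id i.succAbove).rank := by rw [← rank_transpose]; rfl
    _ = A.rank := by rw [hA, rank_submatrix_id_succAbove hu hi]

end Field

end Matrix

theorem exists_mem_apply_last_ne_zero {R : Type*} [Zero R] {n : ℕ} {S : Set (Fin (n + 1) → R)}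
    (hS : ∀ c ∈ S, c 0 = 0 → c (Fin.last n) = 0 → vecCons 0 (Fin.init c) ∈ S)
    {c : Fin (n + 1) → R} (hc : c ∈ S) (hc0 : c 0 = 0) (hne : c ≠ 0) :
    ∃ v ∈ S, v (Fin.last n) ≠ 0 := by
  by_contra! hlast
  suffices ∀ i, ∀ v ∈ S, v 0 = 0 → v i = 0 from hne (funext fun i => this i c hc hc0)
  intro i
  induction i using Fin.reverseInduction with
  | last => exact fun v hv _ => hlast v hv
  | cast j ih =>
    intro v hv hv0
    simpa [Fin.init] using ih _ (hS v hv hv0 (hlast v hv)) rfl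

section MomentMatrix

open MvPolynomial

variable {k : ℕ} {β : ℕ → ℕ → ℝ}

theorem colVec_eq_linearCombination :
    colVec k β = ⇑(Finsupp.linearCombination ℝ
      (fun (m : Fin 2 →₀ ℕ) (a : MIdx k) => β (a.1.1.1 + m 0) (a.1.2.1 + m 1)) ∘ₗ
        (AddMonoidAlgebra.coeffLinearEquiv ℝ).toLinearMap) := by
  funext p a
  simp [colVec, Finsupp.linearCombination_apply, Finsupp.sum, Finset.sum_apply,
    MvPolynomial.support, MvPolynomial.coeff]

theorem colVec_add (p q : MvPolynomial (Fin 2) ℝ) :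
    colVec k β (p + q) = colVec k β p + colVec k β q := by
  rw [colVec_eq_linearCombination]; exact map_add _ p q

theorem colVec_sub (p q : MvPolynomial (Fin 2) ℝ) :
    colVec k β (p - q) = colVec k β p - colVec k β q := by
  rw [colVec_eq_linearCombination]; exact map_sub _ p q

theorem colVec_sum {ι : Type*} (s : Finset ι) (p : ι → MvPolynomial (Fin 2) ℝ) :
    colVec k β (∑ i ∈ s, p i) = ∑ i ∈ s, colVec k β (p i) := by
  rw [colVec_eq_linearCombination]; exact map_sum _ p s

theorem colVec_smul (r : ℝ) (p : MvPolynomial (Fin 2) ℝ) :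
    colVec k β (r • p) = r • colVec k β p := by
  rw [colVec_eq_linearCombination]; exact map_smul _ r p

theorem colVec_monomial (d : Fin 2 →₀ ℕ) (r : ℝ) :
    colVec k β (monomial d r) = fun a => r * β (a.1.1.1 + d 0) (a.1.2.1 + d 1) := by
  rw [colVec_eq_linearCombination]
  funext a
  simp [← single_eq_monomial]

theorem colVec_X_pow_mul_X_pow (i j : ℕ) :
    colVec k β (X 0 ^ i * X 1 ^ j) = fun a => β (a.1.1.1 + i) (a.1.2.1 + j) := by
  rw [X_pow_eq_monomial, X_pow_eq_monomial, monomial_mul, one_mul, colVec_monomial]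
  simp

theorem colVec_X_mul_X_sub_one
    (hXY : ∀ a : MIdx k, β (a.1.1.1 + 1) (a.1.2.1 + 1) = β a.1.1.1 a.1.2.1) :
    colVec k β (X 0 * X 1 - 1) = 0 := by
  have e1 := colVec_X_pow_mul_X_pow (k := k) (β := β) 1 1
  have e0 := colVec_X_pow_mul_X_pow (k := k) (β := β) 0 0
  simp only [pow_one, pow_zero, mul_one] at e1 e0
  rw [colVec_sub, e1, e0]
  funext a
  simp [hXY a]

theorem mB_eq (k t : ℕ) : mB k t = (t - k, k - t) := by
  unfold mB; split_ifs <;> ext <;> dsimp only <;> omega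

def bIdx (k : ℕ) (t : Fin (2 * k + 1)) : MIdx k :=
  ⟨(⟨(mB k t).1, by rw [mB_eq]; omega⟩, ⟨(mB k t).2, by rw [mB_eq]; omega⟩),
    by simp only [mB_eq]; omega⟩

theorem MB_eq_submatrix : MB k β = (M2 k β).submatrix (bIdx k) (bIdx k) := rfl

theorem M2_transpose : (M2 k β)ᵀ = M2 k β := by
  ext a b
  simp [M2, add_comm]

-- Truncated subtraction makes this `Y^(k-t)` for `t ≤ k` and `X^(t-k)` for `t ≥ k`, the monomial
-- in position `t` of `B` (see `mB_eq`).
def bMon (k t : ℕ) : MvPolynomial (Fin 2) ℝ := X 0 ^ (t - k) * X 1 ^ (k - t)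

def bPoly (k : ℕ) (c : Fin (2 * k + 1) → ℝ) : MvPolynomial (Fin 2) ℝ :=
  ∑ t, c t • bMon k t

theorem colVec_bPoly (c : Fin (2 * k + 1) → ℝ) :
    colVec k β (bPoly k c) = (M2 k β).submatrix id (bIdx k) *ᵥ c := by
  funext a
  simp only [bPoly, bMon, colVec_sum, colVec_smul, colVec_X_pow_mul_X_pow, Finset.sum_apply,
    Pi.smul_apply, smul_eq_mul, mulVec, dotProduct, M2, submatrix_apply, id_eq, bIdx, mB_eq,
    mul_comm]
  rfl

theorem MB_mulVec_eq_zero_iff (hpsd : (M2 k β).PosSemidef) {c : Fin (2 * k + 1) → ℝ} :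
    MB k β *ᵥ c = 0 ↔ colVec k β (bPoly k c) = 0 := by
  rw [colVec_bPoly]
  refine ⟨hpsd.submatrix_mulVec_eq_zero (bIdx k), fun h => ?_⟩
  funext s
  exact congrFun h (bIdx k s)

theorem bMon_mul_X_zero (k t : ℕ) :
    bMon k t * X 0 =
      bMon k (t + 1) + (X 0 * X 1 - 1) * if t < k then X 1 ^ (k - (t + 1)) else 0 := by
  unfold bMon
  rcases lt_or_ge t k with h | h
  · rw [if_pos h, show k - t = k - (t + 1) + 1 by omega, show t + 1 - k = 0 by omega,
      show t - k = 0 by omega]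
    ring
  · rw [if_neg (by omega), show k - (t + 1) = k - t by omega, show t + 1 - k = t - k + 1 by omega]
    ring

theorem bPoly_mul_X_zero {c : Fin (2 * k + 1) → ℝ} (hl : c (Fin.last (2 * k)) = 0) :
    bPoly k c * X 0 = bPoly k (vecCons 0 (Fin.init c)) + (X 0 * X 1 - 1) *
      ∑ t, c t • if t.1 < k then X 1 ^ (k - (t.1 + 1)) else 0 := by
  unfold bPoly
  rw [Fin.sum_univ_castSucc, hl, Fin.sum_univ_succ, Fin.sum_univ_castSucc, hl]
  simp only [zero_smul, add_zero, cons_val_zero, zero_add, cons_val_succ, Finset.sum_mul,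
    Finset.mul_sum, ← Finset.sum_add_distrib]
  refine Finset.sum_congr rfl fun j _ => ?_
  rw [smul_mul_assoc, bMon_mul_X_zero, mul_smul_comm, smul_add]
  rfl

theorem totalDegree_bMon_le (k t : ℕ) : (bMon k t).totalDegree ≤ (t - k) + (k - t) :=
  (totalDegree_mul _ _).trans (by simp [totalDegree_X_pow])

theorem totalDegree_sum_smul_le {ι σ R : Type*} [Fintype ι] [CommSemiring R] {c : ι → R}
    {p : ι → MvPolynomial σ R} {d : ℕ} (h : ∀ t, c t ≠ 0 → (p t).totalDegree ≤ d) :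
    (∑ t, c t • p t).totalDegree ≤ d := by
  refine (totalDegree_finsetSum _ _).trans (Finset.sup_le fun t _ => ?_)
  by_cases ht : c t = 0
  · simp [ht]
  · exact (totalDegree_smul_le _ _).trans (h t ht)

theorem MB_mulVec_cons_init_eq_zero (hk : 2 ≤ k) (hpsd : (M2 k β).PosSemidef) (hrg : RG2 k β)
    (hXY : ∀ a : MIdx k, β (a.1.1.1 + 1) (a.1.2.1 + 1) = β a.1.1.1 a.1.2.1)
    {c : Fin (2 * k + 1) → ℝ} (hc : MB k β *ᵥ c = 0) (h0 : c 0 = 0)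
    (hl : c (Fin.last (2 * k)) = 0) :
    MB k β *ᵥ vecCons 0 (Fin.init c) = 0 := by
  rw [MB_mulVec_eq_zero_iff hpsd] at hc ⊢
  have hne : ∀ t, c t ≠ 0 → t.1 ≠ 0 ∧ t.1 ≠ 2 * k := fun t ht =>
    ⟨fun h => ht (by rwa [show t = 0 from Fin.ext h]),
      fun h => ht (by rwa [show t = Fin.last _ from Fin.ext h])⟩
  have hdeg : (bPoly k c).totalDegree ≤ k - 1 := totalDegree_sum_smul_le fun t ht =>
    (totalDegree_bMon_le k t).trans (by have := hne t ht; omega)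
  set r : MvPolynomial (Fin 2) ℝ := ∑ t, c t • if t.1 < k then X 1 ^ (k - (t.1 + 1)) else 0
  have hr : r.totalDegree ≤ k - 2 := totalDegree_sum_smul_le fun t ht => by
    split_ifs
    · rw [totalDegree_X_pow]; have := hne t ht; omega
    · simp
  have hxy : (X 0 * X 1 - 1 : MvPolynomial (Fin 2) ℝ).totalDegree ≤ 2 :=
    (totalDegree_sub _ _).trans (max_le ((totalDegree_mul _ _).trans (by simp [totalDegree_X]))
      (by simp))
  have hx : (X 0 : MvPolynomial (Fin 2) ℝ).totalDegree = 1 := totalDegree_X 0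
  have h1 : colVec k β (bPoly k c * X 0) = 0 := hrg _ _ (by omega) (by omega)
    ((totalDegree_mul _ _).trans (by omega)) hc
  have h2 : colVec k β ((X 0 * X 1 - 1) * r) = 0 := hrg _ _ (by omega) (by omega)
    ((totalDegree_mul _ _).trans (by omega)) (colVec_X_mul_X_sub_one hXY)
  rwa [bPoly_mul_X_zero hl, colVec_add, h2, add_zero] at h1

theorem exists_MB_mulVec_eq_zero_apply_last_ne_zero (hk : 2 ≤ k) (hpsd : (M2 k β).PosSemidef)
    (hrg : RG2 k β) (hXY : ∀ a : MIdx k, β (a.1.1.1 + 1) (a.1.2.1 + 1) = β a.1.1.1 a.1.2.1)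
    (hlt : (MB k β).rank < 2 * k) :
    ∃ u, MB k β *ᵥ u = 0 ∧ u (Fin.last (2 * k)) ≠ 0 :=
  have hcard : (MB k β).rank + 1 < Fintype.card (Fin (2 * k + 1)) := by simp; omega
  have ⟨c, hc0, hc, hci⟩ := exists_mulVec_eq_zero_apply_eq_zero hcard 0
  exists_mem_apply_last_ne_zero (S := {u | MB k β *ᵥ u = 0})
    (fun _ hc h0 hl => MB_mulVec_cons_init_eq_zero hk hpsd hrg hXY hc h0 hl) hc hci hc0

def MIdx.swap (a : MIdx k) : MIdx k := ⟨(a.1.2, a.1.1), (Nat.add_comm _ _).trans_le a.2⟩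

@[simp]
theorem MIdx.swap_swap (a : MIdx k) : a.swap.swap = a := rfl

theorem M2_swap : M2 k (Function.swap β) = (M2 k β).submatrix MIdx.swap MIdx.swap := rfl

theorem colVec_swap (p : MvPolynomial (Fin 2) ℝ) :
    colVec k (Function.swap β) p = colVec k β (rename (Equiv.swap 0 1) p) ∘ MIdx.swap := by
  induction p using MvPolynomial.induction_on' with
  | monomial d r =>
    funext a
    simp [rename_monomial, colVec_monomial, MIdx.swap, Finsupp.mapDomain_equiv_apply]
  | add p q hp hq => rw [map_add, colVec_add, colVec_add, hp, hq]; rfl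

theorem RG2_swap (hrg : RG2 k β) : RG2 k (Function.swap β) := by
  intro p q hp hq hpq h
  have hp' : colVec k β (rename (Equiv.swap 0 1) p) = 0 := by
    funext a
    simpa [colVec_swap] using congrFun h a.swap
  rw [colVec_swap, map_mul, hrg _ _ ((totalDegree_rename_le _ p).trans hp)
    ((totalDegree_rename_le _ q).trans hq)
    (by rw [← map_mul]; exact (totalDegree_rename_le _ _).trans hpq) hp']
  rfl

theorem MB_swap : MB k (Function.swap β) = (MB k β).submatrix Fin.revPerm Fin.revPerm := by
  ext s t
  simp only [MB, mB_eq, Function.swap, of_apply, submatrix_apply, Fin.revPerm_apply, Fin.val_rev]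
  congr 1 <;> omega

theorem exists_MB_mulVec_eq_zero_apply_zero_ne_zero (hk : 2 ≤ k) (hpsd : (M2 k β).PosSemidef)
    (hrg : RG2 k β) (hXY : ∀ a : MIdx k, β (a.1.1.1 + 1) (a.1.2.1 + 1) = β a.1.1.1 a.1.2.1)
    (hlt : (MB k β).rank < 2 * k) :
    ∃ u, MB k β *ᵥ u = 0 ∧ u 0 ≠ 0 := by
  have hlt' : (MB k (Function.swap β)).rank < 2 * k := by
    rwa [MB_swap, rank_submatrix]
  obtain ⟨u, hu, hu_last⟩ := exists_MB_mulVec_eq_zero_apply_last_ne_zero hk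
    (M2_swap ▸ hpsd.submatrix _) (RG2_swap hrg) (fun a => hXY a.swap) hlt'
  refine ⟨u ∘ Fin.revPerm, ?_, by simpa using hu_last⟩
  rw [MB_swap, submatrix_mulVec_equiv] at hu
  funext s
  simpa using congrFun hu s.rev

end MomentMatrix

theorem stmt15_general (k : ℕ) (hk : 2 ≤ k) (β : ℕ → ℕ → ℝ)
    (hpsd : (M2 k β).PosSemidef) (hrg : RG2 k β)
    (hXY : ∀ a : MIdx k, β (a.1.1.1 + 1) (a.1.2.1 + 1) = β a.1.1.1 a.1.2.1)
    (hlt : (MB k β).rank < 2*k) :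
    (MBnoX k β).rank = (MB k β).rank ∧ (MBnoY k β).rank = (MB k β).rank := by
  have hsym : (MB k β)ᵀ = MB k β := by rw [MB_eq_submatrix, transpose_submatrix, M2_transpose]
  obtain ⟨u, hu, hu_last⟩ := exists_MB_mulVec_eq_zero_apply_last_ne_zero hk hpsd hrg hXY hlt
  obtain ⟨v, hv, hv_zero⟩ := exists_MB_mulVec_eq_zero_apply_zero_ne_zero hk hpsd hrg hXY hlt
  constructor
  · rw [← rank_submatrix_succAbove_of_transpose_eq hsym hu hu_last, Fin.succAbove_last]; rfl
  · rw [← rank_submatrix_succAbove_of_transpose_eq hsym hv hv_zero, Fin.succAbove_zero]; rfl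

theorem stmt15 (k : ℕ) (hk : 2 ≤ k) (β : ℕ → ℕ → ℝ) (hb0 : 0 < β 0 0)
    (hpsd : (M2 k β).PosSemidef) (hrg : RG2 k β)
    (hXY : ∀ a : MIdx k, β (a.1.1.1 + 1) (a.1.2.1 + 1) = β a.1.1.1 a.1.2.1)
    (hlt : (MB k β).rank < 2*k) :
    (MBnoX k β).rank = (MB k β).rank ∧ (MBnoY k β).rank = (MB k β).rank :=
  stmt15_general k hk β hpsd hrg hXY hlt
end
end

section
/- Let t ∈ ℕ, let x₁,...,x_t ∈ ℝ∖{0} be distinct, ρ₁,...,ρ_t > 0, and k ∈ ℕ. Suppose the 2-dimensional sequence (β_{i,j})_{i+j≤2k} satisfies β_{i,j} = β_{i-2,j-1} whenever i ≥ 2, j ≥ 1. Define β̃_m for m ∈ {-4k, -4k+2, -4k+3, ..., 2k} by β̃_m = β_{0,|m|/2} if m < 0 even, β̃_m = β_{1,⌈|m|/2⌉} if m < 0 odd, and β̃_m = β_{m,0} if m ≥ 0. Then Σ_ℓ ρ_ℓ δ_{(x_ℓ, x_ℓ^{-2})} represents (β_{i,j}) (i.e., β_{i,j} = Σ_ℓ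 ρ_ℓ x_ℓ^i x_ℓ^{-2j} for all i+j ≤ 2k) if and only if β̃_m = Σ_ℓ ρ_ℓ x_ℓ^m for all m ∈ {-4k, -4k+2, -4k+3, ..., 2k}. -/
/-!
The relation `β i j = β (i-2) (j-1)` makes `β i j` depend only on `i - 2j`, the exponent of `x`
in `x ^ i * (x ^ (-2)) ^ j`. Every pair `(i, j)` is a shift by multiples of `(2, 1)` of a unique
pair with `i ≤ 1` or `j = 0`, and these normal forms are exactly the entries used to define `β̃`;
so both sides of the equivalence say the same thing, one entry per value of `i - 2j`.
-/

/-- The univariate sequence `β̃` read off from `β`, indexed by the exponent `m = i - 2j`. -/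
def reducedMoment {α : Type*} (β : ℕ → ℕ → α) (m : ℤ) : α :=
  if 0 ≤ m then β m.toNat 0
  else if Even m then β 0 ((-m).toNat / 2)
  else β 1 (((-m).toNat + 1) / 2)

theorem exists_reducedMoment_eq {α : Type*} (β : ℕ → ℕ → α) (m : ℤ) :
    ∃ i j : ℕ, (i : ℤ) - 2 * j = m ∧ (i ≤ 1 ∨ j = 0) ∧ reducedMoment β m = β i j := by
  unfold reducedMoment
  split_ifs with hm hev
  · exact ⟨m.toNat, 0, by omega, Or.inr rfl, rfl⟩
  · obtain ⟨r, hr⟩ := hev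
    exact ⟨0, (-m).toNat / 2, by omega, Or.inl zero_le_one, rfl⟩
  · have hodd : m % 2 = 1 := Int.not_even_iff.mp hev
    exact ⟨1, ((-m).toNat + 1) / 2, by omega, Or.inl le_rfl, rfl⟩

section Shift

variable {α : Type*} {β : ℕ → ℕ → α} {N : ℕ}

theorem apply_add_two_mul_add_eq
    (hβ : ∀ i j : ℕ, 2 ≤ i → 1 ≤ j → i + j ≤ N → β i j = β (i - 2) (j - 1))
    (i j n : ℕ) (h : i + 2 * n + (j + n) ≤ N) : β (i + 2 * n) (j + n) = β i j := by
  induction n with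
  | zero => rfl
  | succ n ih =>
    rw [hβ _ _ (by omega) (by omega) h]
    exact ih (by omega)

theorem apply_eq_reducedMoment
    (hβ : ∀ i j : ℕ, 2 ≤ i → 1 ≤ j → i + j ≤ N → β i j = β (i - 2) (j - 1))
    {i j : ℕ} (h : i + j ≤ N) : β i j = reducedMoment β ((i : ℤ) - 2 * j) := by
  obtain ⟨i₀, j₀, hsub, hnormal, hred⟩ := exists_reducedMoment_eq β ((i : ℤ) - 2 * j)
  obtain ⟨n, rfl, rfl⟩ : ∃ n, i = i₀ + 2 * n ∧ j = j₀ + n := ⟨j - j₀, by omega, by omega⟩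
  rw [hred, apply_add_two_mul_add_eq hβ i₀ j₀ _ h]

end Shift

theorem zpow_natCast_sub_two_mul {G : Type*} [GroupWithZero G] {a : G} (ha : a ≠ 0) (i j : ℕ) :
    a ^ ((i : ℤ) - 2 * j) = a ^ i * ((a ^ 2)⁻¹) ^ j := by
  rw [zpow_sub₀ ha, show (2 : ℤ) * j = ((2 * j : ℕ) : ℤ) by push_cast; rfl, zpow_natCast,
    zpow_natCast, div_eq_mul_inv, pow_mul, inv_pow]

theorem stmt17_general (k t : ℕ) (x : Fin t → ℝ) (ρ : Fin t → ℝ)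
    (hx0 : ∀ ℓ, x ℓ ≠ 0)
    (β : ℕ → ℕ → ℝ)
    (hstruct : ∀ i j : ℕ, 2 ≤ i → 1 ≤ j → i + j ≤ 2*k → β i j = β (i-2) (j-1)) :
    (∀ i j : ℕ, i + j ≤ 2*k →
        β i j = ∑ ℓ, ρ ℓ * x ℓ ^ i * ((x ℓ ^ 2)⁻¹) ^ j) ↔
      (∀ m : ℤ, (m = -(4*k : ℤ) ∨ (-(4*k : ℤ) + 2 ≤ m ∧ m ≤ 2*k)) →
        (if 0 ≤ m then β m.toNat 0
         else if Even m then β 0 ((-m).toNat / 2)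
         else β 1 (((-m).toNat + 1) / 2)) =
          ∑ ℓ, ρ ℓ * x ℓ ^ m) := by
  have hsum (i j : ℕ) : ∑ ℓ, ρ ℓ * x ℓ ^ ((i : ℤ) - 2 * j) =
      ∑ ℓ, ρ ℓ * x ℓ ^ i * ((x ℓ ^ 2)⁻¹) ^ j := by
    simp only [zpow_natCast_sub_two_mul (hx0 _), mul_assoc]
  change _ ↔ ∀ m : ℤ, _ → reducedMoment β m = _
  constructor
  · intro h m hm
    obtain ⟨i, j, rfl, hnormal, hred⟩ := exists_reducedMoment_eq β m
    rw [hred, hsum, h i j (by omega)]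
  · intro h i j hij
    rw [apply_eq_reducedMoment hstruct hij, h _ (by omega), hsum]

theorem stmt17 (k t : ℕ) (x : Fin t → ℝ) (ρ : Fin t → ℝ)
    (hxinj : Function.Injective x) (hx0 : ∀ ℓ, x ℓ ≠ 0) (hρ : ∀ ℓ, 0 < ρ ℓ)
    (β : ℕ → ℕ → ℝ)
    (hstruct : ∀ i j : ℕ, 2 ≤ i → 1 ≤ j → i + j ≤ 2*k → β i j = β (i-2) (j-1)) :
    (∀ i j : ℕ, i + j ≤ 2*k →
        β i j = ∑ ℓ, ρ ℓ * x ℓ ^ i * ((x ℓ ^ 2)⁻¹) ^ j) ↔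
      (∀ m : ℤ, (m = -(4*k : ℤ) ∨ (-(4*k : ℤ) + 2 ≤ m ∧ m ≤ 2*k)) →
        (if 0 ≤ m then β m.toNat 0
         else if Even m then β 0 ((-m).toNat / 2)
         else β 1 (((-m).toNat + 1) / 2)) =
          ∑ ℓ, ρ ℓ * x ℓ ^ m) :=
  stmt17_general k t x ρ hx0 β hstruct
end

section
/- Let β = (β_{-2k₁},...,β_{2k₂}) with β_{-2k₁} > 0 be a singular sequence (its Hankel matrix M(-k₁,k₂) is singular) of rank r that is recursively generated, with generating polynomial p(x) = x^r − Σ_{i=0}^{r-1} φ_i x^i having roots x_1,...,x_r and densities ρ_1,...,ρ_r > 0 giving a representing measure for the truncated positive part (β_0,...,β_{2k₂}, and further β_j for j ≥ -2k₁ down to some index). If μ = Σ_{ℓ=1}^r ρ_ℓ δ_{x_ℓ} represents β_{j+1},...,β_{j+r} for some -2k₁ ≤ j ≤ -1, i.e., β_{j+i} = Σ_ℓ ρ_ℓ x_ℓ^{j+i} for i = 1,...,r, then μ also represents β_j, i.e., β_j = Σ_ℓ ρ_ℓ x_ℓ^j. -/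
/-!
Since `φ₀ ≠ 0`, dividing `p(x) = 0` by `φ₀` shows that every power sequence `n ↦ x_ℓ ^ n` of a
root satisfies the backward recursion with coefficients `ψ`; so does any linear combination
`n ↦ ∑ ρ_ℓ x_ℓ ^ n`. Applying the recursion at `j` to `β` and to the moments of `μ`, which agree
at `j + 1, …, j + r`, gives agreement at `j`.
-/

open Finset

section BackwardRecursion

variable {K : Type*} [Field K] {r : ℕ}

def backwardCoeff (hr0 : 0 < r) (φ : Fin r → K) (i : Fin r) : K :=
  if h : i.1 + 1 < r then -φ ⟨i.1 + 1, h⟩ / φ ⟨0, hr0⟩ else 1 / φ ⟨0, hr0⟩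

theorem sum_backwardCoeff_mul_pow_succ (hr0 : 0 < r) (φ : Fin r → K) (hφ0 : φ ⟨0, hr0⟩ ≠ 0)
    {x : K} (hx : x ^ r = ∑ i : Fin r, φ i * x ^ i.1) :
    ∑ i : Fin r, backwardCoeff hr0 φ i * x ^ (i.1 + 1) = 1 := by
  obtain ⟨n, rfl⟩ : ∃ n, r = n + 1 := ⟨r - 1, by omega⟩
  rw [Fin.sum_univ_succ] at hx
  rw [Fin.sum_univ_castSucc]
  simp only [backwardCoeff, Fin.val_castSucc, Fin.val_last, add_lt_add_iff_right, Fin.is_lt,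
    dif_pos, lt_irrefl, dif_neg, not_false_eq_true, Fin.zero_eta] at hφ0 ⊢
  have hsucc : ∀ i : Fin n, (⟨i.1 + 1, by omega⟩ : Fin (n + 1)) = i.succ := fun _ => rfl
  simp only [hsucc, div_mul_eq_mul_div, ← sum_div, neg_mul, sum_neg_distrib]
  simp only [Fin.val_zero, pow_zero, mul_one, Fin.val_succ] at hx
  field_simp
  linear_combination hx

theorem zpow_eq_sum_backwardCoeff_mul_zpow (hr0 : 0 < r) (φ : Fin r → K) (hφ0 : φ ⟨0, hr0⟩ ≠ 0)
    {x : K} (hx0 : x ≠ 0) (hx : x ^ r = ∑ i : Fin r, φ i * x ^ i.1) (j : ℤ) :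
    x ^ j = ∑ i : Fin r, backwardCoeff hr0 φ i * x ^ (j + i.1 + 1) := by
  have hshift : ∀ i : Fin r, x ^ (j + i.1 + 1) = x ^ j * x ^ (i.1 + 1) := fun i => by
    rw [← zpow_natCast, ← zpow_add₀ hx0]; push_cast; ring_nf
  simp only [hshift, mul_left_comm _ (x ^ j), ← mul_sum,
    sum_backwardCoeff_mul_pow_succ hr0 φ hφ0 hx, mul_one]

end BackwardRecursion

theorem stmt19_general (k₁ k₂ r : ℕ) (hr0 : 0 < r) (β : ℤ → ℝ)
    (φ : Fin r → ℝ) (hφ0 : φ ⟨0, hr0⟩ ≠ 0)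
    (x : Fin r → ℝ) (ρ : Fin r → ℝ)
    (hx0 : ∀ ℓ, x ℓ ≠ 0)
    (hroot : ∀ ℓ, x ℓ ^ r = ∑ i : Fin r, φ i * x ℓ ^ i.1)
    (ψ : Fin r → ℝ)
    (hψ : ∀ i : Fin r, ψ i =
      if h : i.1 + 1 < r then -(φ ⟨i.1 + 1, h⟩) / φ ⟨0, hr0⟩ else 1 / φ ⟨0, hr0⟩)
    (hnrg : ∀ m : ℤ, -(2*k₁ : ℤ) ≤ m → m + r ≤ 2*k₂ →
      β m = ∑ i : Fin r, ψ i * β (m + i.1 + 1))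
    (j : ℤ) (hj₁ : -(2*k₁ : ℤ) ≤ j) (hj₃ : j + r ≤ 2*k₂)
    (hrep : ∀ i : Fin r, β (j + i.1 + 1) = ∑ ℓ, ρ ℓ * x ℓ ^ (j + i.1 + 1)) :
    β j = ∑ ℓ, ρ ℓ * x ℓ ^ j := by
  obtain rfl : ψ = backwardCoeff hr0 φ := funext hψ
  calc β j = ∑ i : Fin r, backwardCoeff hr0 φ i * ∑ ℓ, ρ ℓ * x ℓ ^ (j + i.1 + 1) := by
        simp only [hnrg j hj₁ hj₃, hrep]
    _ = ∑ ℓ, ρ ℓ * ∑ i : Fin r, backwardCoeff hr0 φ i * x ℓ ^ (j + i.1 + 1) := by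
        simp only [mul_sum]; rw [sum_comm]; simp only [mul_left_comm]
    _ = ∑ ℓ, ρ ℓ * x ℓ ^ j := by
        simp only [← zpow_eq_sum_backwardCoeff_mul_zpow hr0 φ hφ0 (hx0 _) (hroot _)]

theorem stmt19 (k₁ k₂ r : ℕ) (hr0 : 0 < r) (β : ℤ → ℝ)
    (φ : Fin r → ℝ) (hφ0 : φ ⟨0, hr0⟩ ≠ 0)
    (x : Fin r → ℝ) (ρ : Fin r → ℝ) (hρ : ∀ ℓ, 0 < ρ ℓ)
    (hx0 : ∀ ℓ, x ℓ ≠ 0)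
    (hroot : ∀ ℓ, x ℓ ^ r = ∑ i : Fin r, φ i * x ℓ ^ i.1)
    (ψ : Fin r → ℝ)
    (hψ : ∀ i : Fin r, ψ i =
      if h : i.1 + 1 < r then -(φ ⟨i.1 + 1, h⟩) / φ ⟨0, hr0⟩ else 1 / φ ⟨0, hr0⟩)
    (hnrg : ∀ m : ℤ, -(2*k₁ : ℤ) ≤ m → m + r ≤ 2*k₂ →
      β m = ∑ i : Fin r, ψ i * β (m + i.1 + 1))
    (j : ℤ) (hj₁ : -(2*k₁ : ℤ) ≤ j) (hj₂ : j ≤ -1) (hj₃ : j + r ≤ 2*k₂)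
    (hrep : ∀ i : Fin r, β (j + i.1 + 1) = ∑ ℓ, ρ ℓ * x ℓ ^ (j + i.1 + 1)) :
    β j = ∑ ℓ, ρ ℓ * x ℓ ^ j :=
  stmt19_general k₁ k₂ r hr0 β φ hφ0 x ρ hx0 hroot ψ hψ hnrg j hj₁ hj₃ hrep
end
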